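/- arXiv:1108.2974 — 12 statements merged into one kernel-verified Lean document; each statement's English description precedes it below -/
import Mathlib

section
/- Let F be the synchronous bi-threshold map on {0,1}^n determined by a real symmetric n×n matrix A and up- /down-threshold sequences (k↑_i), (k↓_i). Then for every x ∈ {0,1}^n there exists a natural number s such that F^{s+2}(x) = F^{s}(x). -/
/-!
A Goles–Olivos Lyapunov argument adapted to bi-thresholds. For states `u, v ∈ {0,1}^n` put
`E(u, v) = ∑ᵢ vᵢ (θᵢ(uᵢ) - (A u)ᵢ) + ∑ᵢ uᵢ k↑ᵢ`, where `θᵢ(0) = k↑ᵢ` and `θᵢ(1) = k↓ᵢ`.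
Since `A` is symmetric, `E` is symmetric, and
`E(u, v) - E(v, w) = ∑ᵢ (wᵢ - uᵢ) ((A v)ᵢ - θᵢ(vᵢ))`.
For `v = F u`, `w = F v` every summand is nonnegative, and positive at any `i` with `uᵢ = 1`,
`wᵢ = 0`. So `u ↦ E(u, F u)` decreases along orbits, strictly unless `u ≤ F² u`; ordering
states by this energy and then reversely by `≤`, `F²` strictly descends until it reaches a
fixed point, which it must do on a finite state space.
-/

open Finset

namespace Function

variable {α : Type*} [Finite α]

theorem exists_isFixedPt_iterate_of_descent {γ : Type*} [Preorder γ] (G : α → α)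
    (key : α → γ) (hkey : ∀ u, G u ≠ u → key (G u) < key u) (x : α) :
    ∃ k, IsFixedPt G (G^[k] x) := by
  by_contra! hne
  have hanti : StrictAnti fun k => key (G^[k] x) :=
    strictAnti_nat_of_succ_lt fun k => by
      simpa only [iterate_succ_apply'] using hkey _ (hne k)
  exact not_injective_infinite_finite _ hanti.injective.of_comp

theorem exists_iterate_add_two_eq_of_energy [PartialOrder α] {β : Type*} [PartialOrder β]
    {F : α → α} (Φ : α → β) (hle : ∀ u, Φ (F u) ≤ Φ u)
    (hlt : ∀ u, ¬ u ≤ F (F u) → Φ (F u) < Φ u) (x : α) :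
    ∃ s, F^[s + 2] x = F^[s] x := by
  have hdescent : ∀ u, F^[2] u ≠ u →
      toLex (Φ (F^[2] u), OrderDual.toDual (F^[2] u)) < toLex (Φ u, OrderDual.toDual u) := by
    intro u hu
    rw [Prod.Lex.toLex_lt_toLex, OrderDual.toDual_lt_toDual]
    by_cases hmono : u ≤ F (F u)
    · have hle₂ : Φ (F (F u)) ≤ Φ u := (hle _).trans (hle u)
      exact hle₂.lt_or_eq.imp_right fun heq => ⟨heq, hmono.lt_of_ne' hu⟩
    · exact Or.inl ((hle _).trans_lt (hlt u hmono))
  obtain ⟨k, hk⟩ := exists_isFixedPt_iterate_of_descent (F^[2])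
    (fun u => toLex (Φ u, OrderDual.toDual u)) hdescent x
  refine ⟨2 * k, ?_⟩
  rw [show 2 * k + 2 = 2 * (k + 1) by ring, iterate_mul, iterate_mul, iterate_succ_apply']
  exact hk

end Function

namespace BiThreshold

variable {ι : Type*} [Fintype ι] (A : ι → ι → ℝ) (kup kdown : ι → ℝ)

def indicator (b : Bool) : ℝ := if b then 1 else 0

@[simp] theorem indicator_true : indicator true = 1 := rfl

@[simp] theorem indicator_false : indicator false = 0 := rfl

def field (x : ι → Bool) (i : ι) : ℝ := ∑ j, A i j * indicator (x j)

def threshold (i : ι) (b : Bool) : ℝ := if b then kdown i else kup i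

def IsBiThresholdMap (F : (ι → Bool) → ι → Bool) : Prop :=
  ∀ x i, F x i = true ↔ threshold kup kdown i (x i) ≤ field A x i

def energy (u v : ι → Bool) : ℝ :=
  ∑ i, (indicator (v i) * (threshold kup kdown i (u i) - field A u i) + indicator (u i) * kup i)

variable {A}

theorem sum_indicator_mul_field_comm (hA : ∀ i j, A i j = A j i) (u v : ι → Bool) :
    ∑ i, indicator (v i) * field A u i = ∑ i, indicator (u i) * field A v i := by
  simp only [field, mul_sum]
  rw [sum_comm]
  refine sum_congr rfl fun i _ => sum_congr rfl fun j _ => ?_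
  rw [hA]
  ring

theorem energy_comm (hA : ∀ i j, A i j = A j i) (u v : ι → Bool) :
    energy A kup kdown u v = energy A kup kdown v u := by
  have hlocal : ∀ i, indicator (v i) * threshold kup kdown i (u i) + indicator (u i) * kup i
      = indicator (u i) * threshold kup kdown i (v i) + indicator (v i) * kup i := by
    intro i
    cases u i <;> cases v i <;> simp [indicator, threshold, add_comm]
  have hsplit : ∀ u v : ι → Bool, energy A kup kdown u v
      = ∑ i, (indicator (v i) * threshold kup kdown i (u i) + indicator (u i) * kup i)
        - ∑ i, indicator (v i) * field A u i := by
    intro u v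
    rw [energy, ← sum_sub_distrib]
    exact sum_congr rfl fun i _ => by ring
  rw [hsplit, hsplit, sum_indicator_mul_field_comm hA, sum_congr rfl fun i _ => hlocal i]

theorem energy_sub_energy (hA : ∀ i j, A i j = A j i) (u v w : ι → Bool) :
    energy A kup kdown u v - energy A kup kdown v w
      = ∑ i, (indicator (w i) - indicator (u i)) * (field A v i - threshold kup kdown i (v i)) := by
  rw [energy_comm kup kdown hA u v, energy, energy, ← sum_sub_distrib]
  exact sum_congr rfl fun i _ => by ring

namespace IsBiThresholdMap

variable {kup kdown} {F : (ι → Bool) → ι → Bool}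

theorem mul_field_sub_threshold_nonneg (hF : IsBiThresholdMap A kup kdown F)
    (u v : ι → Bool) (i : ι) :
    0 ≤ (indicator (F v i) - indicator (u i)) * (field A v i - threshold kup kdown i (v i)) := by
  cases hw : F v i
  · have hlt := not_le.mp (mt (hF v i).mpr (by simp [hw]))
    cases u i <;> simp [hlt.le]
  · have hle := (hF v i).mp hw
    cases u i <;> simp [hle]

theorem mul_field_sub_threshold_pos (hF : IsBiThresholdMap A kup kdown F)
    {u v : ι → Bool} {i : ι} (hu : u i = true) (hw : F v i = false) :
    0 < (indicator (F v i) - indicator (u i)) * (field A v i - threshold kup kdown i (v i)) := by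
  have hlt := not_le.mp (mt (hF v i).mpr (by simp [hw]))
  simp only [hu, hw, indicator_true, indicator_false]
  linarith

theorem energy_map_le (hA : ∀ i j, A i j = A j i) (hF : IsBiThresholdMap A kup kdown F)
    (u : ι → Bool) : energy A kup kdown (F u) (F (F u)) ≤ energy A kup kdown u (F u) := by
  have hsum := energy_sub_energy kup kdown hA u (F u) (F (F u))
  have := sum_nonneg fun i (_ : i ∈ univ) => hF.mul_field_sub_threshold_nonneg u (F u) i
  linarith

theorem energy_map_lt (hA : ∀ i j, A i j = A j i) (hF : IsBiThresholdMap A kup kdown F)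
    {u : ι → Bool} (hu : ¬ u ≤ F (F u)) :
    energy A kup kdown (F u) (F (F u)) < energy A kup kdown u (F u) := by
  obtain ⟨i, hi⟩ : ∃ i, ¬ u i ≤ F (F u) i := by simpa [Pi.le_def] using hu
  have hui : u i = true ∧ F (F u) i = false := by
    revert hi
    cases u i <;> cases F (F u) i <;> decide
  have hsum := energy_sub_energy kup kdown hA u (F u) (F (F u))
  have := sum_pos' (fun j (_ : j ∈ univ) => hF.mul_field_sub_threshold_nonneg u (F u) j)
    ⟨i, mem_univ i, hF.mul_field_sub_threshold_pos hui.1 hui.2⟩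
  linarith

end IsBiThresholdMap

end BiThreshold

open BiThreshold in
/-- the synchronous bi-threshold map determined by a real symmetric matrix `A`
and up and down threshold sequences `kup`, `kdown`; every state eventually satisfies
`F^[s+2] x = F^[s] x`. The map `F` is characterized by: the new state of coordinate `i`
is `1` iff (`x i = 0` and the weighted sum is `≥ kup i`) or (`x i = 1` and the weighted
sum is `≥ kdown i`). -/
theorem bithreshold_sync_two_periodic
    (n : ℕ) (A : Fin n → Fin n → ℝ) (hA : ∀ i j, A i j = A j i)
    (kup kdown : Fin n → ℝ)
    (F : (Fin n → Bool) → Fin n → Bool)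
    (hF : ∀ (x : Fin n → Bool) (i : Fin n), F x i = true ↔
      ((x i = false ∧ kup i ≤ ∑ j, A i j * (if x j = true then (1 : ℝ) else 0)) ∨
       (x i = true ∧ kdown i ≤ ∑ j, A i j * (if x j = true then (1 : ℝ) else 0)))) :
    ∀ x : Fin n → Bool, ∃ s : ℕ, F^[s + 2] x = F^[s] x := by
  have hF' : IsBiThresholdMap A kup kdown F := fun x i => by
    rw [hF]
    cases x i <;> simp [threshold, field, indicator]
  exact Function.exists_iterate_add_two_eq_of_energy (fun u => energy A kup kdown u (F u))
    (hF'.energy_map_le hA) (fun _ hu => hF'.energy_map_lt hA hu)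
end

section
/- Let X be a finite undirected simple graph on vertex set {1,…,n} with bi-threshold vertex functions (with arbitrary per-vertex up- and down-thresholds), and let F : {0,1}^n → {0,1}^n be the synchronous map F(x)_v = f_v(x[v]) applying all vertex functions simultaneously. Then every periodic point of F has period 1 or 2; that is, F may only have fixed points and 2-cycles as limit sets. -/
/-!
Goles' energy argument. With a self-loop of weight `k↑_v - k↓_v + 1` at each vertex, a bi-threshold
function becomes a plain threshold function, so the synchronous map is a threshold network
`F x = [W x ≥ θ]` with a symmetric integer matrix `W`. The two-step energy
`E(x, y) = -2 xᵀ W y + (2θ - 1) ⬝ (x + y)` satisfies `E(F y, y) ≤ E(y, x)`, strictly unless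
`F y = x`. Hence `x ↦ E(F x, x)` never increases along an orbit and drops whenever
`F (F x) ≠ x`; on a periodic orbit it returns to its initial value, so `F (F x) = x`.
-/

/-- `σ(x[v])`: the number of vertices in state `1` among `v` and its neighbors. -/
noncomputable def sigmaLoc {n : ℕ} (G : SimpleGraph (Fin n)) (x : Fin n → Bool) (v : Fin n) : ℕ :=
  {u : Fin n | G.Adj v u ∧ x u = true}.ncard + (if x v = true then 1 else 0)

/-- The `X`-local bi-threshold function `F_v`: updates coordinate `v` of `x` by the
bi-threshold rule with up-threshold `kup v` and down-threshold `kdown v`, leaving all other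
coordinates unchanged. -/
noncomputable def localStep {n : ℕ} (G : SimpleGraph (Fin n)) (kup kdown : Fin n → ℕ)
    (x : Fin n → Bool) (v : Fin n) : Fin n → Bool :=
  Function.update x v
    (if x v = true then (if sigmaLoc G x v < kdown v then false else true)
     else (if kup v ≤ sigmaLoc G x v then true else false))

/-- The sequential dynamical system map for the update sequence `l`:
apply the local functions `F_v` in the order given by `l`. -/
noncomputable def sdsMap {n : ℕ} (G : SimpleGraph (Fin n)) (kup kdown : Fin n → ℕ)
    (l : List (Fin n)) (x : Fin n → Bool) : Fin n → Bool :=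
  l.foldl (localStep G kup kdown) x

/-- The synchronous bi-threshold map over the graph `G`: all vertex functions are applied
simultaneously. -/
noncomputable def syncMap {n : ℕ} (G : SimpleGraph (Fin n)) (kup kdown : Fin n → ℕ)
    (x : Fin n → Bool) : Fin n → Bool := fun v =>
  if x v = true then (if sigmaLoc G x v < kdown v then false else true)
  else (if kup v ≤ sigmaLoc G x v then true else false)

open Finset Matrix Function

section Lyapunov

variable {α β : Type*} [Preorder β] {f : α → α} {V : α → β}

theorem iterate_le_of_map_le (hV : ∀ x, V (f x) ≤ V x) (n : ℕ) (x : α) :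
    V (f^[n] x) ≤ V x := by
  induction n with
  | zero => exact le_rfl
  | succ n ih => rw [iterate_succ_apply']; exact (hV _).trans ih

theorem Function.IsPeriodicPt.apply_apply_eq_of_lyapunov (hV : ∀ x, V (f x) ≤ V x)
    (hV_lt : ∀ x, f (f x) ≠ x → V (f x) < V x) {p : ℕ} {x : α} (hx : IsPeriodicPt f p x)
    (hp : 0 < p) : f (f x) = x := by
  by_contra hne
  obtain ⟨q, rfl⟩ : ∃ q, p = q + 1 := ⟨p - 1, by omega⟩
  have hback : V x ≤ V (f x) :=
    calc V x = V (f^[q] (f x)) := by rw [← iterate_succ_apply, hx.eq]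
      _ ≤ V (f x) := iterate_le_of_map_le hV q _
  exact (hV_lt x hne).not_ge hback

end Lyapunov

section ThresholdNetwork

theorem toNat_decide_sub_mul_nonneg (b : Bool) (s t : ℤ) :
    0 ≤ (((decide (t ≤ s)).toNat : ℤ) - b.toNat) * (2 * s - (2 * t - 1)) := by
  by_cases h : t ≤ s <;> cases b <;> simp [h] <;> omega

theorem toNat_decide_sub_mul_pos {b : Bool} {s t : ℤ} (hb : decide (t ≤ s) ≠ b) :
    0 < (((decide (t ≤ s)).toNat : ℤ) - b.toNat) * (2 * s - (2 * t - 1)) := by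
  by_cases h : t ≤ s <;> cases b <;> simp [h] at hb ⊢
  all_goals omega

variable {ι : Type*} [Fintype ι] (W : Matrix ι ι ℤ) (θ : ι → ℤ)

def boolVec (x : ι → Bool) : ι → ℤ := fun v => (x v).toNat

def thresholdMap (x : ι → Bool) : ι → Bool :=
  fun v => decide (θ v ≤ (W *ᵥ boolVec x) v)

/-- The threshold is shifted to `θ - 1/2` (and everything doubled) so that the local field never
sits on it; this is what makes the energy drop strictly. -/
def thresholdEnergy (a b : ι → ℤ) : ℤ :=
  -2 * (a ⬝ᵥ W *ᵥ b) + (2 • θ - 1) ⬝ᵥ (a + b)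

variable {W θ}

theorem thresholdEnergy_sub_thresholdEnergy (hW : W.IsSymm) (a b c : ι → ℤ) :
    thresholdEnergy W θ b a - thresholdEnergy W θ c b
      = (c - a) ⬝ᵥ (2 • W *ᵥ b - (2 • θ - 1)) := by
  have hswap : b ⬝ᵥ W *ᵥ a = a ⬝ᵥ W *ᵥ b := by
    rw [dotProduct_mulVec, ← mulVec_transpose, hW.eq, dotProduct_comm]
  simp only [thresholdEnergy, hswap, dotProduct_add, sub_dotProduct, dotProduct_sub,
    dotProduct_smul, dotProduct_comm _ (2 • θ - 1)]
  ring

theorem thresholdEnergy_map_le (hW : W.IsSymm) (x y : ι → Bool) :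
    thresholdEnergy W θ (boolVec (thresholdMap W θ y)) (boolVec y)
      ≤ thresholdEnergy W θ (boolVec y) (boolVec x) := by
  rw [← sub_nonneg, thresholdEnergy_sub_thresholdEnergy hW]
  exact sum_nonneg fun v _ => by
    simpa [boolVec, thresholdMap] using toNat_decide_sub_mul_nonneg (x v) _ (θ v)

theorem thresholdEnergy_map_lt (hW : W.IsSymm) {x y : ι → Bool} (h : thresholdMap W θ y ≠ x) :
    thresholdEnergy W θ (boolVec (thresholdMap W θ y)) (boolVec y)
      < thresholdEnergy W θ (boolVec y) (boolVec x) := by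
  obtain ⟨v, hv⟩ := ne_iff.mp h
  rw [← sub_pos, thresholdEnergy_sub_thresholdEnergy hW]
  refine sum_pos' (fun u _ => ?_) ⟨v, mem_univ v, ?_⟩
  · simpa [boolVec, thresholdMap] using toNat_decide_sub_mul_nonneg (x u) _ (θ u)
  · simpa [boolVec, thresholdMap] using toNat_decide_sub_mul_pos hv

theorem thresholdMap_apply_apply_eq_of_isPeriodicPt (hW : W.IsSymm) {p : ℕ} {x : ι → Bool}
    (hx : IsPeriodicPt (thresholdMap W θ) p x) (hp : 0 < p) :
    thresholdMap W θ (thresholdMap W θ x) = x :=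
  hx.apply_apply_eq_of_lyapunov
    (V := fun x => thresholdEnergy W θ (boolVec (thresholdMap W θ x)) (boolVec x))
    (fun x => thresholdEnergy_map_le hW x _) (fun _ h => thresholdEnergy_map_lt hW h) hp

end ThresholdNetwork

section Bithreshold

variable {n : ℕ} (G : SimpleGraph (Fin n)) [DecidableRel G.Adj] (kup kdown : Fin n → ℕ)

/-- In state `1` a vertex counts itself in `σ` and compares `σ` with `kdown`; the self-loop weight
`kup - kdown + 1` turns this into comparing the weighted field with `kup`. -/
def bithresholdWeights : Matrix (Fin n) (Fin n) ℤ :=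
  G.adjMatrix ℤ + diagonal fun v => (kup v : ℤ) - kdown v + 1

theorem isSymm_bithresholdWeights : (bithresholdWeights G kup kdown).IsSymm :=
  G.isSymm_adjMatrix.add (isSymm_diagonal _)

theorem adjMatrix_mulVec_boolVec (x : Fin n → Bool) (v : Fin n) :
    (G.adjMatrix ℤ *ᵥ boolVec x) v = {u | G.Adj v u ∧ x u = true}.ncard := by
  have hset : {u | G.Adj v u ∧ x u = true} = ↑({u ∈ G.neighborFinset v | x u = true}) := by
    ext; simp
  rw [hset, Set.ncard_coe_finset, card_filter, SimpleGraph.adjMatrix_mulVec_apply]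
  push_cast
  exact sum_congr rfl fun u _ => by unfold boolVec; cases x u <;> rfl

theorem syncMap_eq_thresholdMap :
    syncMap G kup kdown = thresholdMap (bithresholdWeights G kup kdown) (fun v => kup v) := by
  ext x v
  simp only [syncMap, thresholdMap, sigmaLoc, bithresholdWeights, add_mulVec, Pi.add_apply,
    mulVec_diagonal, adjMatrix_mulVec_boolVec, boolVec]
  by_cases hxv : x v = true <;> simp only [hxv, if_true, Bool.false_eq_true, if_false] <;>
    split_ifs <;> simp <;> omega

end Bithreshold

/-- every periodic point of the synchronous bi-threshold map over a finite
graph has (least) period 1 or 2: fixed points and 2-cycles are the only limit sets. -/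
theorem bithreshold_sync_period_one_or_two
    (n : ℕ) (G : SimpleGraph (Fin n)) (kup kdown : Fin n → ℕ)
    (x : Fin n → Bool) (p : ℕ) (hp : 0 < p)
    (hper : (syncMap G kup kdown)^[p] x = x)
    (hmin : ∀ q : ℕ, 0 < q → (syncMap G kup kdown)^[q] x = x → p ≤ q) :
    p = 1 ∨ p = 2 := by
  classical
  rw [syncMap_eq_thresholdMap] at hper hmin
  have h2 : IsPeriodicPt (thresholdMap (bithresholdWeights G kup kdown) (fun v => kup v)) 2 x :=
    thresholdMap_apply_apply_eq_of_isPeriodicPt (isSymm_bithresholdWeights G kup kdown) hper hp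
  have hp2 : p ≤ 2 := hmin 2 two_pos h2
  omega
end

section
/- Let T ≥ 1 and let z : ℤ/Tℤ → {0,1} have least period at least 3. Let B be a band of z. Then either B contains (as subsets of indices) no block of type (0,1) and no block of type (1,0), or B contains exactly one block of type (0,1) and exactly one block of type (1,0). -/
/-- `isBlock z l q` : the block of `z` starting at `l` has "half-length" `q`, i.e.
`z l = 1`, `z (l-2) = 0`, `q` is the least natural number with `z (l + 2q + 2) = 0`.
The block at `l` is then the index set `{l, l+2, …, l+2q}`. -/
def isBlock {T : ℕ} (z : ZMod T → Bool) (l : ZMod T) (q : ℕ) : Prop :=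
  z l = true ∧ z (l - 2) = false ∧ z (l + ((2 * q + 2 : ℕ) : ZMod T)) = false ∧
    ∀ q' < q, z (l + ((2 * q' + 2 : ℕ) : ZMod T)) = true

/-- The set of indices `{l, l+2, …, l+2q}` of the block starting at `l`. -/
def blockSet {T : ℕ} (l : ZMod T) (q : ℕ) : Set (ZMod T) :=
  {w | ∃ s ≤ q, w = l + ((2 * s : ℕ) : ZMod T)}

/-- The type of the block at `l` (with least `q`): the pair `(z (l-1), z (l+2q+1))`. -/
def blockType {T : ℕ} (z : ZMod T → Bool) (l : ZMod T) (q : ℕ) : Bool × Bool :=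
  (z (l - 1), z (l + ((2 * q + 1 : ℕ) : ZMod T)))

/-- `isBand z a m` : the cyclic interval `{a, a+1, …, a+m}` is a band of `z`:
its endpoints are in state `1`, no two cyclically consecutive indices inside it are both
in state `0`, and the two indices on either side of it are in state `0`. -/
def isBand {T : ℕ} (z : ZMod T → Bool) (a : ZMod T) (m : ℕ) : Prop :=
  z a = true ∧ z (a + ((m : ℕ) : ZMod T)) = true ∧
  (∀ i < m, ¬ (z (a + ((i : ℕ) : ZMod T)) = false ∧ z (a + ((i + 1 : ℕ) : ZMod T)) = false)) ∧
  z (a - 1) = false ∧ z (a - 2) = false ∧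
  z (a + ((m + 1 : ℕ) : ZMod T)) = false ∧ z (a + ((m + 2 : ℕ) : ZMod T)) = false

/-- The set of indices `{a, a+1, …, a+m}` of the band. -/
def bandSet {T : ℕ} (a : ZMod T) (m : ℕ) : Set (ZMod T) :=
  {w | ∃ i ≤ m, w = a + ((i : ℕ) : ZMod T)}

/-! A block in a band whose left neighbour `z (l - 1)` is `0` must start at the left end `a` of
the band, since otherwise `l - 2` and `l - 1` would be two consecutive zeros inside it; likewise a
block whose right neighbour is `0` must end at the right end `a + m`. A block is determined by its
first index, and also by its last one. The band contains a block starting at `a` and a block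
ending at `a + m`. If these coincide, that block has type `(0,0)` and every other block in the band
has type `(1,1)`; otherwise they are the unique blocks of types `(0,1)` and `(1,0)`. -/

section Block

variable {T : ℕ} {z : ZMod T → Bool} {l l' : ZMod T} {q q' : ℕ}

theorem isBlock.apply_add_two_mul (hb : isBlock z l q) {s : ℕ} (hs : s ≤ q) :
    z (l + ((2 * s : ℕ) : ZMod T)) = true := by
  rcases s with _ | s
  · simpa using hb.1
  · simpa [Nat.mul_succ] using hb.2.2.2 s (by omega)

theorem isBlock.length_unique (hb : isBlock z l q) (hb' : isBlock z l q') : q = q' :=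
  le_antisymm (not_lt.1 fun h => Bool.false_ne_true (hb'.2.2.1.symm.trans (hb.2.2.2 q' h)))
    (not_lt.1 fun h => Bool.false_ne_true (hb.2.2.1.symm.trans (hb'.2.2.2 q h)))

theorem isBlock.length_le_of_end_eq (hb : isBlock z l q) (hb' : isBlock z l' q')
    (h : l + ((2 * q : ℕ) : ZMod T) = l' + ((2 * q' : ℕ) : ZMod T)) : q' ≤ q := by
  refine not_lt.1 fun hlt => ?_
  obtain ⟨d, rfl⟩ : ∃ d, q' = q + d + 1 := ⟨q' - q - 1, by omega⟩
  have hpos : l - 2 = l' + ((2 * d : ℕ) : ZMod T) := by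
    push_cast at h ⊢
    linear_combination h
  have htrue := hb'.apply_add_two_mul (s := d) (by omega)
  rw [← hpos, hb.2.1] at htrue
  exact Bool.false_ne_true htrue

theorem isBlock.eq_of_end_eq (hb : isBlock z l q) (hb' : isBlock z l' q')
    (h : l + ((2 * q : ℕ) : ZMod T) = l' + ((2 * q' : ℕ) : ZMod T)) : l = l' ∧ q = q' := by
  obtain rfl : q = q' :=
    le_antisymm (hb'.length_le_of_end_eq hb h.symm) (hb.length_le_of_end_eq hb' h)
  exact ⟨add_right_cancel h, rfl⟩

theorem exists_isBlock_of_apply_add_eq_false (h1 : z l = true) (h0 : z (l - 2) = false) {k : ℕ}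
    (hk : z (l + ((2 * k + 2 : ℕ) : ZMod T)) = false) : ∃ q ≤ k, isBlock z l q := by
  classical
  have hex : ∃ q, z (l + ((2 * q + 2 : ℕ) : ZMod T)) = false := ⟨k, hk⟩
  exact ⟨Nat.find hex, Nat.find_min' hex hk, h1, h0, Nat.find_spec hex,
    fun q' hq' => by simpa using Nat.find_min hex hq'⟩

theorem exists_isBlock_of_apply_sub_eq_false {e : ZMod T} (h1 : z e = true)
    (h0 : z (e + 2) = false) {k : ℕ} (hk : z (e - ((2 * k + 2 : ℕ) : ZMod T)) = false) :
    ∃ r ≤ k, isBlock z (e - ((2 * r : ℕ) : ZMod T)) r := by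
  classical
  have hex : ∃ r, z (e - ((2 * r + 2 : ℕ) : ZMod T)) = false := ⟨k, hk⟩
  obtain ⟨r, hrk, hr, hmin⟩ : ∃ r ≤ k, z (e - ((2 * r + 2 : ℕ) : ZMod T)) = false ∧
      ∀ s < r, ¬ z (e - ((2 * s + 2 : ℕ) : ZMod T)) = false :=
    ⟨Nat.find hex, Nat.find_min' hex hk, Nat.find_spec hex, fun s => Nat.find_min hex⟩
  have htrue : ∀ s ≤ r, z (e - ((2 * s : ℕ) : ZMod T)) = true := by
    rintro (_ | s) hs
    · simpa using h1
    · simpa [Nat.mul_succ] using hmin s (by omega)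
  refine ⟨r, hrk, htrue r le_rfl, ?_, ?_, fun t ht => ?_⟩
  · convert hr using 2
    push_cast
    ring
  · convert h0 using 2
    push_cast
    ring
  · obtain ⟨d, rfl⟩ : ∃ d, r = t + 1 + d := ⟨r - t - 1, by omega⟩
    convert htrue d (by omega) using 2
    push_cast
    ring

end Block

section Band

variable {T : ℕ} {z : ZMod T → Bool} {a : ZMod T} {m : ℕ}

theorem blockSet_subset_bandSet {i q : ℕ} (h : i + 2 * q ≤ m) :
    blockSet (a + (i : ZMod T)) q ⊆ bandSet a m := by
  rintro _ ⟨s, hs, rfl⟩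
  exact ⟨i + 2 * s, by omega, by push_cast; ring⟩

theorem isBand.eq_of_apply_sub_eq_false (hband : isBand z a m) {l : ZMod T}
    (hl : l ∈ bandSet a m) (h1 : z (l - 1) = false) (h2 : z (l - 2) = false) : l = a := by
  obtain ⟨i, hi, rfl⟩ := hl
  rcases i with _ | _ | i
  · simp
  · simp [hband.1] at h1
  · refine absurd ⟨?_, ?_⟩ (hband.2.2.1 i (by omega))
    · convert h2 using 2
      push_cast
      ring
    · convert h1 using 2
      push_cast
      ring

theorem isBand.eq_of_apply_add_eq_false (hband : isBand z a m) {e : ZMod T}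
    (he : e ∈ bandSet a m) (h1 : z (e + 1) = false) (h2 : z (e + 2) = false) :
    e = a + m := by
  obtain ⟨i, hi, rfl⟩ := he
  obtain rfl | rfl | hlt : i = m ∨ i + 1 = m ∨ i + 2 ≤ m := by omega
  · rfl
  · have hlast := hband.2.1
    push_cast at hlast
    rw [← add_assoc, h1] at hlast
    exact (Bool.false_ne_true hlast).elim
  · refine absurd ⟨?_, ?_⟩ (hband.2.2.1 (i + 1) (by omega))
    · convert h1 using 2
      push_cast
      ring
    · convert h2 using 2
      push_cast
      ring

theorem isBand.exists_isBlock_start (hband : isBand z a m) :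
    ∃ q, isBlock z a q ∧ blockSet a q ⊆ bandSet a m := by
  obtain ⟨k, hkm, hk⟩ : ∃ k, 2 * k ≤ m ∧ z (a + ((2 * k + 2 : ℕ) : ZMod T)) = false := by
    rcases Nat.even_or_odd' m with ⟨k, rfl | rfl⟩
    · exact ⟨k, le_rfl, hband.2.2.2.2.2.2⟩
    · exact ⟨k, by omega, hband.2.2.2.2.2.1⟩
  obtain ⟨q, hqk, hq⟩ := exists_isBlock_of_apply_add_eq_false hband.1 hband.2.2.2.2.1 hk
  exact ⟨q, hq, by simpa using blockSet_subset_bandSet (a := a) (i := 0) (by omega)⟩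

theorem isBand.exists_isBlock_end (hband : isBand z a m) :
    ∃ l r, isBlock z l r ∧ blockSet l r ⊆ bandSet a m ∧
      l + ((2 * r : ℕ) : ZMod T) = a + m := by
  obtain ⟨k, hkm, hk⟩ :
      ∃ k, 2 * k ≤ m ∧ z (a + m - ((2 * k + 2 : ℕ) : ZMod T)) = false := by
    rcases Nat.even_or_odd' m with ⟨k, rfl | rfl⟩
    · exact ⟨k, le_rfl, by convert hband.2.2.2.2.1 using 2; push_cast; ring⟩
    · exact ⟨k, by omega, by convert hband.2.2.2.1 using 2; push_cast; ring⟩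
  have h0 : z (a + m + 2) = false := by
    convert hband.2.2.2.2.2.2 using 2
    push_cast
    ring
  obtain ⟨r, hrk, hr⟩ := exists_isBlock_of_apply_sub_eq_false hband.2.1 h0 hk
  have hstart : a + (m : ZMod T) - ((2 * r : ℕ) : ZMod T) = a + ((m - 2 * r : ℕ) : ZMod T) := by
    rw [Nat.cast_sub (by omega)]
    ring
  refine ⟨_, r, hr, ?_, by ring⟩
  rw [hstart]
  exact blockSet_subset_bandSet (by omega)

theorem isBand.blockType_eq (hband : isBand z a m) {l₁ : ZMod T} {q₁ : ℕ} (h₁ : isBlock z l₁ q₁)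
    (h₁_end : l₁ + ((2 * q₁ : ℕ) : ZMod T) = a + m) {l : ZMod T} {q : ℕ} (hb : isBlock z l q)
    (hs : blockSet l q ⊆ bandSet a m) :
    blockType z l q = (decide (l ≠ a), decide (l ≠ l₁)) := by
  have hl : l ∈ bandSet a m := hs ⟨0, Nat.zero_le q, by simp⟩
  have hend : l + ((2 * q : ℕ) : ZMod T) ∈ bandSet a m := hs ⟨q, le_rfl, rfl⟩
  have hnext : l + ((2 * q + 1 : ℕ) : ZMod T) = l + ((2 * q : ℕ) : ZMod T) + 1 := by
    push_cast
    ring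
  refine Prod.ext ?_ ?_
  · by_cases h : l = a
    · simpa [blockType, h] using hband.2.2.2.1
    · simpa [blockType, h] using mt (hband.eq_of_apply_sub_eq_false hl · hb.2.1) h
  · show z (l + ((2 * q + 1 : ℕ) : ZMod T)) = decide (l ≠ l₁)
    by_cases h : l = l₁
    · subst h
      obtain rfl := hb.length_unique h₁
      have hpos : l + ((2 * q + 1 : ℕ) : ZMod T) = a + ((m + 1 : ℕ) : ZMod T) := by
        rw [hnext, h₁_end]
        push_cast
        ring
      rw [hpos, hband.2.2.2.2.2.1]
      simp
    · have h2 : z (l + ((2 * q : ℕ) : ZMod T) + 2) = false := by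
        convert hb.2.2.1 using 2
        push_cast
        ring
      rw [decide_eq_true h, hnext]
      refine Bool.of_not_eq_false fun h1 => h ?_
      exact (hb.eq_of_end_eq h₁ ((hband.eq_of_apply_add_eq_false hend h1 h2).trans
        h₁_end.symm)).1

end Band

theorem band_block_dichotomy_general
    (T : ℕ) (z : ZMod T → Bool)
    (a : ZMod T) (m : ℕ) (hband : isBand z a m) :
    (¬ ∃ (l : ZMod T) (q : ℕ), isBlock z l q ∧ blockSet l q ⊆ bandSet a m ∧
        (blockType z l q = (false, true) ∨ blockType z l q = (true, false)))
    ∨ ((∃! l : ZMod T, ∃ q : ℕ,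
          isBlock z l q ∧ blockSet l q ⊆ bandSet a m ∧ blockType z l q = (false, true))
       ∧ (∃! l : ZMod T, ∃ q : ℕ,
          isBlock z l q ∧ blockSet l q ⊆ bandSet a m ∧ blockType z l q = (true, false))) := by
  obtain ⟨q₀, h₀, h₀_sub⟩ := hband.exists_isBlock_start
  obtain ⟨l₁, q₁, h₁, h₁_sub, h₁_end⟩ := hband.exists_isBlock_end
  have htype {l : ZMod T} {q : ℕ} (hb : isBlock z l q) (hs : blockSet l q ⊆ bandSet a m) :
      (blockType z l q = (false, true) ↔ l = a ∧ l ≠ l₁) ∧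
        (blockType z l q = (true, false) ↔ l ≠ a ∧ l = l₁) := by
    simp [hband.blockType_eq h₁ h₁_end hb hs]
  by_cases hl₁ : l₁ = a
  · left
    rintro ⟨l, q, hb, hs, hty | hty⟩
    · obtain ⟨rfl, hne⟩ := (htype hb hs).1.1 hty
      exact hne hl₁.symm
    · obtain ⟨hne, rfl⟩ := (htype hb hs).2.1 hty
      exact hne hl₁
  · right
    refine ⟨⟨a, ⟨q₀, h₀, h₀_sub, (htype h₀ h₀_sub).1.2 ⟨rfl, Ne.symm hl₁⟩⟩, ?_⟩,
      ⟨l₁, ⟨q₁, h₁, h₁_sub, (htype h₁ h₁_sub).2.2 ⟨hl₁, rfl⟩⟩, ?_⟩⟩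
    · rintro l ⟨q, hb, hs, hty⟩
      exact ((htype hb hs).1.1 hty).1
    · rintro l ⟨q, hb, hs, hty⟩
      exact ((htype hb hs).2.1 hty).2

/-- if `z : ℤ/Tℤ → {0,1}` has least period at least 3, then a band of `z`
either contains no block of type `(0,1)` and no block of type `(1,0)`, or contains exactly
one block of type `(0,1)` and exactly one block of type `(1,0)`. -/
theorem band_block_dichotomy
    (T : ℕ) [NeZero T] (z : ZMod T → Bool)
    (hz : ¬ ∀ l : ZMod T, z (l + 2) = z l)
    (a : ZMod T) (m : ℕ) (hband : isBand z a m) :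
    (¬ ∃ (l : ZMod T) (q : ℕ), isBlock z l q ∧ blockSet l q ⊆ bandSet a m ∧
        (blockType z l q = (false, true) ∨ blockType z l q = (true, false)))
    ∨ ((∃! l : ZMod T, ∃ q : ℕ,
          isBlock z l q ∧ blockSet l q ⊆ bandSet a m ∧ blockType z l q = (false, true))
       ∧ (∃! l : ZMod T, ∃ q : ℕ,
          isBlock z l q ∧ blockSet l q ⊆ bandSet a m ∧ blockType z l q = (true, false))) :=
  band_block_dichotomy_general T z a m hband
end

section
/- Let T ≥ 1 and let z : ℤ/Tℤ → {0,1} have least period at least 3. Then the number of blocks of z of type (0,1) equals the number of blocks of z of type (1,0). -/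
/-!
The blocks of type `(0, 0)` or `(0, 1)` correspond to their first elements `l`, which are exactly
the positions where `z (l - 2), z (l - 1), z l` reads `0 0 1`; the blocks of type `(0, 0)` or
`(1, 0)` correspond to their last elements `m`, which are exactly the positions where
`z m, z (m + 1), z (m + 2)` reads `1 0 0`. So it suffices that `001` and `100` occur equally often
in a cyclic word. With `b` the `0/1` indicator of `z`,
`(1 - b x) (1 - b (x+1)) b (x+2) - b x (1 - b (x+1)) (1 - b (x+2)) = k x - k (x+1)` for
`k x = (1 - b x) (1 - b (x+1))`, and such differences sum to zero over `ℤ/Tℤ`.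
-/

open Finset

theorem sum_pattern001_eq_sum_pattern100 {G R : Type*} [Ring G] [Fintype G] [CommRing R]
    (b : G → R) :
    ∑ x, (1 - b (x - 2)) * (1 - b (x - 1)) * b x
      = ∑ x, b x * (1 - b (x + 1)) * (1 - b (x + 2)) := by
  set k : G → R := fun x ↦ (1 - b x) * (1 - b (x + 1))
  have hk : ∀ x, k (x + 1) = (1 - b (x + 1)) * (1 - b (x + 2)) := fun x ↦ by
    simp only [k, add_assoc, one_add_one_eq_two]
  have telescope : ∑ x, (k x - k (x + 1)) = 0 := by
    rw [sum_sub_distrib, sub_eq_zero]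
    exact (Equiv.sum_comp (Equiv.addRight (1 : G)) k).symm
  calc ∑ x, (1 - b (x - 2)) * (1 - b (x - 1)) * b x
      = ∑ x, (1 - b x) * (1 - b (x + 1)) * b (x + 2) := by
        rw [← Equiv.sum_comp (Equiv.addRight (2 : G))]
        have h21 : (2 : G) - 1 = 1 := by norm_num
        simp only [Equiv.coe_addRight, add_sub_cancel_right, add_sub_assoc, h21]
    _ = ∑ x, (b x * (1 - b (x + 1)) * (1 - b (x + 2)) + (k x - k (x + 1))) := by
        refine sum_congr rfl fun x _ ↦ ?_
        rw [hk]
        ring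
    _ = ∑ x, b x * (1 - b (x + 1)) * (1 - b (x + 2)) := by
        rw [sum_add_distrib, telescope, add_zero]

section Blocks

variable {T : ℕ} {z : ZMod T → Bool} {l m : ZMod T} {q : ℕ}

theorem isBlock_iff :
    isBlock z l q ↔ z (l - 2) = false ∧ (∀ j ≤ q, z (l + 2 * j) = true) ∧
      z (l + 2 * (q + 1 : ℕ)) = false := by
  have hcast : ∀ n : ℕ, ((2 * n + 2 : ℕ) : ZMod T) = 2 * (n + 1 : ℕ) := fun n ↦ by push_cast; ring
  simp only [isBlock, hcast]
  constructor
  · rintro ⟨h1, h0, hend, hmid⟩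
    refine ⟨h0, fun j hj ↦ ?_, hend⟩
    cases j with
    | zero => simpa using h1
    | succ j => exact hmid j hj
  · rintro ⟨h0, hmid, hend⟩
    exact ⟨by simpa using hmid 0 q.zero_le, h0, hend, fun j hj ↦ hmid (j + 1) hj⟩

theorem isBlock.unique {q' : ℕ} (h : isBlock z l q) (h' : isBlock z l q') : q = q' := by
  wlog hle : q ≤ q' generalizing q q'
  · exact (this h' h (le_of_not_ge hle)).symm
  by_contra hne
  have := (isBlock_iff.1 h').2.1 (q + 1) (by omega)
  rw [(isBlock_iff.1 h).2.2] at this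
  exact Bool.false_ne_true this

theorem isBlock.eq_of_add_two_mul_eq {l' : ZMod T} {q' : ℕ} (h : isBlock z l q)
    (h' : isBlock z l' q') (he : l + 2 * q = l' + 2 * q') : l = l' := by
  wlog hle : q ≤ q' generalizing l l' q q'
  · exact (this h' h he.symm (le_of_not_ge hle)).symm
  obtain ⟨d, rfl⟩ | rfl := (Nat.lt_or_eq_of_le hle).imp_left Nat.exists_eq_add_of_lt
  · have hd := (isBlock_iff.1 h').2.1 d (by omega)
    have : l' + 2 * d = l - 2 := by push_cast at he; linear_combination -he
    simp [this, (isBlock_iff.1 h).1] at hd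
  · exact add_right_cancel he

theorem two_mul_natCast_pred [NeZero T] : 2 * ((T - 1 : ℕ) : ZMod T) = -2 := by
  rw [Nat.cast_sub NeZero.one_le, ZMod.natCast_self]
  ring

theorem exists_isBlock [NeZero T] (h1 : z l = true) (h0 : z (l - 2) = false) :
    ∃ q, isBlock z l q := by
  have hex : ∃ n : ℕ, z (l + 2 * n) = false :=
    ⟨T - 1, by rwa [two_mul_natCast_pred, ← sub_eq_add_neg]⟩
  obtain ⟨q, hq⟩ : ∃ q, Nat.find hex = q + 1 :=
    Nat.exists_eq_succ_of_ne_zero fun h ↦ by simpa [h, h1] using Nat.find_spec hex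
  refine ⟨q, isBlock_iff.2 ⟨h0, fun j hj ↦ ?_, hq ▸ Nat.find_spec hex⟩⟩
  simpa using Nat.find_min hex (by omega : j < Nat.find hex)

theorem exists_isBlock_add_two_mul_eq [NeZero T] (h1 : z m = true) (h2 : z (m + 2) = false) :
    ∃ l q, isBlock z l q ∧ l + 2 * q = m := by
  have hex : ∃ n : ℕ, z (m - 2 * n) = false :=
    ⟨T - 1, by rwa [two_mul_natCast_pred, sub_neg_eq_add]⟩
  obtain ⟨q, hq⟩ : ∃ q, Nat.find hex = q + 1 :=
    Nat.exists_eq_succ_of_ne_zero fun h ↦ by simpa [h, h1] using Nat.find_spec hex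
  refine ⟨m - 2 * q, q, isBlock_iff.2 ⟨?_, fun j hj ↦ ?_, ?_⟩, by ring⟩
  · convert hq ▸ Nat.find_spec hex using 2
    push_cast
    ring
  · obtain ⟨d, rfl⟩ := Nat.exists_eq_add_of_le hj
    have hjd : m - 2 * ((j + d : ℕ) : ZMod T) + 2 * j = m - 2 * d := by push_cast; ring
    rw [hjd]
    simpa using Nat.find_min hex (by omega : d < Nat.find hex)
  · convert h2 using 2
    push_cast
    ring

def blocksOfType (z : ZMod T → Bool) (p : Bool × Bool) : Set (ZMod T) :=
  {l | ∃ q, isBlock z l q ∧ blockType z l q = p}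

def pattern001 (z : ZMod T → Bool) : Set (ZMod T) :=
  {l | z (l - 2) = false ∧ z (l - 1) = false ∧ z l = true}

def pattern100 (z : ZMod T → Bool) : Set (ZMod T) :=
  {m | z m = true ∧ z (m + 1) = false ∧ z (m + 2) = false}

theorem disjoint_blocksOfType {p p' : Bool × Bool} (hp : p ≠ p') :
    Disjoint (blocksOfType z p) (blocksOfType z p') :=
  Set.disjoint_left.2 fun _ ⟨_, h, hq⟩ ⟨_, h', hq'⟩ ↦ hp (by rw [← hq, ← hq', h.unique h'])

theorem blocksOfType_union_fst (a : Bool) :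
    blocksOfType z (a, true) ∪ blocksOfType z (a, false) =
      {l | ∃ q, isBlock z l q ∧ z (l - 1) = a} := by
  ext l
  simp only [blocksOfType, blockType, Set.mem_union, Set.mem_ofPred_eq, Prod.mk.injEq,
    ← exists_or, ← and_or_left, Bool.eq_false_or_eq_true, and_true]

theorem blocksOfType_union_snd (b : Bool) :
    blocksOfType z (true, b) ∪ blocksOfType z (false, b) =
      {l | ∃ q, isBlock z l q ∧ z (l + 2 * q + 1) = b} := by
  ext l
  simp only [blocksOfType, blockType, Set.mem_union, Set.mem_ofPred_eq, Prod.mk.injEq,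
    ← exists_or, ← and_or_left, ← or_and_right, Bool.eq_false_or_eq_true, true_and]
  push_cast
  simp only [add_assoc]

theorem setOf_isBlock_fst_false_eq_pattern001 [NeZero T] :
    {l | ∃ q, isBlock z l q ∧ z (l - 1) = false} = pattern001 z := by
  ext l
  constructor
  · rintro ⟨q, h, hl⟩
    exact ⟨h.2.1, hl, h.1⟩
  · rintro ⟨h0, hl, h1⟩
    obtain ⟨q, h⟩ := exists_isBlock h1 h0
    exact ⟨q, h, hl⟩

theorem ncard_setOf_isBlock_snd_false_eq_ncard_pattern100 [NeZero T] :
    {l | ∃ q, isBlock z l q ∧ z (l + 2 * q + 1) = false}.ncard = (pattern100 z).ncard := by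
  refine Set.ncard_congr (fun l hl ↦ l + 2 * hl.choose) ?_ ?_ ?_
  · intro l hl
    obtain ⟨h, hnext⟩ := hl.choose_spec
    have hB := isBlock_iff.1 h
    refine ⟨hB.2.1 _ le_rfl, hnext, ?_⟩
    convert hB.2.2 using 2
    push_cast
    ring
  · rintro l l' hl hl' he
    exact hl.choose_spec.1.eq_of_add_two_mul_eq hl'.choose_spec.1 he
  · rintro m ⟨h1, hm1, hm2⟩
    obtain ⟨l, q, h, rfl⟩ := exists_isBlock_add_two_mul_eq h1 hm2
    have hl : ∃ q, isBlock z l q ∧ z (l + 2 * q + 1) = false := ⟨q, h, hm1⟩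
    refine ⟨l, hl, ?_⟩
    rw [hl.choose_spec.1.unique h]

theorem ncard_pattern001_eq_ncard_pattern100 [NeZero T] (z : ZMod T → Bool) :
    (pattern001 z).ncard = (pattern100 z).ncard := by
  classical
  let b : ZMod T → ℤ := fun x ↦ if z x then 1 else 0
  have hcount : ∀ s : Set (ZMod T), (s.ncard : ℤ) = ∑ x, if x ∈ s then 1 else 0 := fun s ↦ by
    rw [sum_boole, Set.ncard_eq_toFinset_card']
    simp
  have h001 : ∀ x, (1 - b (x - 2)) * (1 - b (x - 1)) * b x = if x ∈ pattern001 z then 1 else 0 :=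
    fun x ↦ by
      simp only [b, pattern001, Set.mem_ofPred_eq]
      split_ifs <;> simp_all
  have h100 : ∀ x, b x * (1 - b (x + 1)) * (1 - b (x + 2)) = if x ∈ pattern100 z then 1 else 0 :=
    fun x ↦ by
      simp only [b, pattern100, Set.mem_ofPred_eq]
      split_ifs <;> simp_all
  have := sum_pattern001_eq_sum_pattern100 b
  simp only [h001, h100, ← hcount] at this
  exact_mod_cast this

end Blocks

theorem blocks_type01_eq_type10_general
    (T : ℕ) [NeZero T] (z : ZMod T → Bool) :
    {l : ZMod T | ∃ q : ℕ, isBlock z l q ∧ blockType z l q = (false, true)}.ncard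
      = {l : ZMod T | ∃ q : ℕ, isBlock z l q ∧ blockType z l q = (true, false)}.ncard := by
  show (blocksOfType z (false, true)).ncard = (blocksOfType z (true, false)).ncard
  have h01 : (blocksOfType z (false, true)).ncard + (blocksOfType z (false, false)).ncard
      = (pattern001 z).ncard := by
    rw [← Set.ncard_union_eq (disjoint_blocksOfType (by decide)), blocksOfType_union_fst,
      setOf_isBlock_fst_false_eq_pattern001]
  have h10 : (blocksOfType z (true, false)).ncard + (blocksOfType z (false, false)).ncard
      = (pattern100 z).ncard := by
    rw [← Set.ncard_union_eq (disjoint_blocksOfType (by decide)), blocksOfType_union_snd,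
      ncard_setOf_isBlock_snd_false_eq_ncard_pattern100]
  have := ncard_pattern001_eq_ncard_pattern100 z
  omega

/-- if `z : ℤ/Tℤ → {0,1}` has least period at least 3, then the number of
blocks of `z` of type `(0,1)` equals the number of blocks of `z` of type `(1,0)`. -/
theorem blocks_type01_eq_type10
    (T : ℕ) [NeZero T] (z : ZMod T → Bool)
    (hz : ¬ ∀ l : ZMod T, z (l + 2) = z l) :
    {l : ZMod T | ∃ q : ℕ, isBlock z l q ∧ blockType z l q = (false, true)}.ncard
      = {l : ZMod T | ∃ q : ℕ, isBlock z l q ∧ blockType z l q = (true, false)}.ncard :=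
  blocks_type01_eq_type10_general T z
end

section
/- Let F = (f_1,…,f_n) be the synchronous bi-threshold map on {0,1}^n determined by a real symmetric matrix A = (a_ij) and thresholds (k↑_i), (k↓_i). Let T ≥ 1 and let z_1,…,z_n : ℤ/Tℤ → {0,1} satisfy z_j(l+1) = f_j(z_1(l),…,z_n(l)) for all j and all l ∈ ℤ/Tℤ (i.e., the columns form a periodic orbit of F of period dividing T). If z_i does not satisfy z_i(l+2) = z_i(l) for all l (its least period is at least 3), then Σ_{j=1}^n L(z_i, z_j) < 0. -/
/-!
Writing `S l = ∑ⱼ a_ij z_j(l)` for the input of vertex `i` at time `l`, a cyclic summation by parts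
turns `∑ⱼ L(z_i, z_j)` into `∑ₗ S l (z_i(l-1) - z_i(l+1))`. Subtracting the threshold `θ l` that
`z_i` compares `S l` with does not change this sum, because `θ l` is affine in `z_i(l)`. Each term of
`∑ₗ (S l - θ l) (z_i(l-1) - z_i(l+1))` is nonpositive by the threshold rule, and the term after
a pattern `z_i(m) = 1, z_i(m+2) = 0`, which exists unless `z_i` has period `2`, is negative.
-/

open Finset

section FiniteAddCommGroup

variable {G : Type*} [AddCommGroup G] [Fintype G]

theorem sum_sub_shift_mul_eq_sum_mul_sub_shift {R : Type*} [Ring R] (S x : G → R) (c : G) :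
    ∑ l, (S (l + c) - S (l - c)) * x l = ∑ l, S l * (x (l - c) - x (l + c)) := by
  have h₁ : ∑ l, S (l + c) * x l = ∑ l, S l * x (l - c) :=
    Fintype.sum_equiv (Equiv.addRight c) _ _ fun l => by simp
  have h₂ : ∑ l, S (l - c) * x l = ∑ l, S l * x (l + c) :=
    Fintype.sum_equiv (Equiv.subRight c) _ _ fun l => by simp
  simp only [sub_mul, mul_sub, sum_sub_distrib, h₁, h₂]

theorem sum_affine_mul_sub_shift_eq_zero {R : Type*} [CommRing R] (x : G → R) (a b : R) (c : G) :
    ∑ l, (a + b * x l) * (x (l - c) - x (l + c)) = 0 := by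
  have h₁ : ∑ l, x (l - c) = ∑ l, x (l + c) :=
    Fintype.sum_equiv (Equiv.subRight (c + c)) _ _ fun l => by simp [sub_add_eq_add_sub]
  have h₂ : ∑ l, x l * x (l - c) = ∑ l, x l * x (l + c) :=
    Fintype.sum_equiv (Equiv.subRight c) _ _ fun l => by simp [mul_comm]
  simp only [add_mul, mul_assoc, mul_sub, sum_add_distrib, sum_sub_distrib, ← mul_sum, h₁, h₂,
    sub_self]

theorem exists_eq_true_and_add_eq_false (x : G → Bool) (c : G) (h : ¬ ∀ l, x (l + c) = x l) :
    ∃ m, x m = true ∧ x (m + c) = false := by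
  by_contra! hmono
  apply h
  -- `x ≤ x (· + c)` pointwise, while both sides have the same number of `true`s
  let χ : G → ℤ := fun l => if x l then 1 else 0
  have hnonneg : ∀ l ∈ univ, 0 ≤ χ (l + c) - χ l := fun l _ => by
    cases hl : x l <;> cases hlc : x (l + c) <;> simp_all [χ]
  have hsum : ∑ l, (χ (l + c) - χ l) = 0 := by
    rw [sum_sub_distrib, Fintype.sum_equiv (Equiv.addRight c) (fun l => χ (l + c)) χ fun _ => rfl,
      sub_self]
  intro l
  have hl := (sum_eq_zero_iff_of_nonneg hnonneg).1 hsum l (mem_univ l)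
  cases hx : x l <;> cases hxc : x (l + c) <;> simp_all [χ]

theorem sum_mul_sub_shift_neg (u : G → ℝ) (x : G → Bool) (c : G)
    (hx : ∀ l, x (l + c) = true ↔ 0 ≤ u l) {m : G} (hm : x m = true)
    (hm' : x (m + (c + c)) = false) :
    ∑ l, u l * ((if x (l - c) then 1 else 0) - (if x (l + c) then 1 else 0)) < 0 := by
  have hterm : ∀ l ∈ univ,
      u l * ((if x (l - c) then 1 else 0) - (if x (l + c) then 1 else 0)) ≤ 0 := fun l _ => by
    by_cases hl : x (l + c)
    · have := (hx l).1 hl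
      split_ifs <;> simp_all
    · have := not_le.1 (mt (hx l).2 hl)
      split_ifs <;> simp_all [this.le]
  have hstrict : u (m + c) * ((if x (m + c - c) then 1 else 0) -
      (if x (m + c + c) then 1 else 0)) < 0 := by
    have hneg := not_le.1 (mt (hx (m + c)).2 (by simpa [add_assoc] using hm'))
    simpa [add_assoc, hm, hm'] using hneg
  exact sum_neg' hterm ⟨m + c, mem_univ _, hstrict⟩

end FiniteAddCommGroup

theorem bithreshold_rule_iff (b : Bool) (s kup kdown : ℝ) :
    ((b = false ∧ kup ≤ s) ∨ (b = true ∧ kdown ≤ s)) ↔ (if b then kdown else kup) ≤ s := by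
  cases b <;> simp

theorem bithreshold_orbit_L_sum_neg_general
    (n T : ℕ) [NeZero T] (A : Fin n → Fin n → ℝ)
    (kup kdown : Fin n → ℝ)
    (z : Fin n → ZMod T → Bool)
    (horb : ∀ (j : Fin n) (l : ZMod T), z j (l + 1) = true ↔
      ((z j l = false ∧ kup j ≤ ∑ k, A j k * (if z k l = true then (1 : ℝ) else 0)) ∨
       (z j l = true ∧ kdown j ≤ ∑ k, A j k * (if z k l = true then (1 : ℝ) else 0))))
    (i : Fin n)
    (hi : ¬ ∀ l : ZMod T, z i (l + 2) = z i l) :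
    ∑ j, (A i j * ∑ l : ZMod T,
        ((if z j (l + 1) = true then (1 : ℝ) else 0) - (if z j (l - 1) = true then (1 : ℝ) else 0)) *
          (if z i l = true then (1 : ℝ) else 0)) < 0 := by
  set x : ZMod T → ℝ := fun l => if z i l then 1 else 0
  set S : ZMod T → ℝ := fun l => ∑ k, A i k * (if z k l then 1 else 0)
  set θ : ZMod T → ℝ := fun l => if z i l then kdown i else kup i
  have hS : ∑ j, (A i j * ∑ l : ZMod T,
      ((if z j (l + 1) then (1 : ℝ) else 0) - (if z j (l - 1) then (1 : ℝ) else 0)) * x l) =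
      ∑ l, (S (l + 1) - S (l - 1)) * x l := by
    simp only [S, mul_sum, ← sum_sub_distrib, sum_mul]
    rw [sum_comm]
    exact sum_congr rfl fun _ _ => sum_congr rfl fun _ _ => by ring
  have hθ : ∑ l, θ l * (x (l - 1) - x (l + 1)) = 0 := by
    convert sum_affine_mul_sub_shift_eq_zero x (kup i) (kdown i - kup i) 1 using 3 with l
    by_cases h : z i l <;> simp [θ, x, h]
  obtain ⟨m, hm, hm'⟩ :=
    exists_eq_true_and_add_eq_false (z i) (1 + 1) (by rwa [one_add_one_eq_two])
  have hneg := sum_mul_sub_shift_neg (fun l => S l - θ l) (z i) 1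
    (fun l => (horb i l).trans ((bithreshold_rule_iff _ _ _ _).trans sub_nonneg.symm)) hm hm'
  calc _ = ∑ l, S l * (x (l - 1) - x (l + 1)) := by
        rw [hS, sum_sub_shift_mul_eq_sum_mul_sub_shift]
    _ = ∑ l, (S l - θ l) * (x (l - 1) - x (l + 1)) := by
        simp only [sub_mul, sum_sub_distrib, hθ, sub_zero]
    _ < 0 := hneg

/-- let `F` be the synchronous bi-threshold map on `{0,1}^n` given by a real
symmetric matrix `A` and thresholds `kup`, `kdown` (new state of coordinate `j` is `1` iff
(`x j = 0` and `∑ k, A j k * x k ≥ kup j`) or (`x j = 1` and `∑ k, A j k * x k ≥ kdown j`)).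
If `z_1, …, z_n : ℤ/Tℤ → {0,1}` satisfy `z_j(l+1) = f_j(z_1(l), …, z_n(l))` for all `j, l`,
and `z_i` does not satisfy `z_i(l+2) = z_i(l)` for all `l`, then `∑_j L(z_i, z_j) < 0`,
where `L(z_i, z_j) = A i j * ∑_l (z_j(l+1) - z_j(l-1)) * z_i(l)`. -/
theorem bithreshold_orbit_L_sum_neg
    (n T : ℕ) [NeZero T] (A : Fin n → Fin n → ℝ) (hA : ∀ i j, A i j = A j i)
    (kup kdown : Fin n → ℝ)
    (z : Fin n → ZMod T → Bool)
    (horb : ∀ (j : Fin n) (l : ZMod T), z j (l + 1) = true ↔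
      ((z j l = false ∧ kup j ≤ ∑ k, A j k * (if z k l = true then (1 : ℝ) else 0)) ∨
       (z j l = true ∧ kdown j ≤ ∑ k, A j k * (if z k l = true then (1 : ℝ) else 0))))
    (i : Fin n)
    (hi : ¬ ∀ l : ZMod T, z i (l + 2) = z i l) :
    ∑ j, (A i j * ∑ l : ZMod T,
        ((if z j (l + 1) = true then (1 : ℝ) else 0) - (if z j (l - 1) = true then (1 : ℝ) else 0)) *
          (if z i l = true then (1 : ℝ) else 0)) < 0 :=
  bithreshold_orbit_L_sum_neg_general n T A kup kdown z horb i hi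
end

section
/- Let X be a finite undirected simple graph on vertex set {1,…,n}, let π be a permutation of the vertices, and let each vertex v carry a bi-threshold function with thresholds satisfying k↓_v − k↑_v ≤ 1. Then every periodic point of the sequential dynamical system map F_π is a fixed point; equivalently, for every x ∈ {0,1}^n there exists s with F_π^{s+1}(x) = F_π^{s}(x). -/
open Matrix

theorem List.apply_foldl_lt_of_foldl_ne {α β γ : Type*} [Preorder γ] {g : α → β → α}
    {φ : α → γ} (hg : ∀ x a, g x a ≠ x → φ (g x a) < φ x) :
    ∀ (l : List β) (x : α), l.foldl g x ≠ x → φ (l.foldl g x) < φ x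
  | [], _, hne => absurd rfl hne
  | a :: l, x, hne => by
    rw [List.foldl_cons] at hne ⊢
    by_cases hfix : g x a = x
    · rw [hfix] at hne ⊢
      exact apply_foldl_lt_of_foldl_ne hg l x hne
    by_cases hrest : l.foldl g (g x a) = g x a
    · rw [hrest]
      exact hg x a hfix
    · exact (apply_foldl_lt_of_foldl_ne hg l _ hrest).trans (hg x a hfix)

theorem Function.exists_iterate_succ_eq_of_lt_of_ne {α β : Type*} [Finite α] [Preorder β]
    {f : α → α} {φ : α → β} (hφ : ∀ y, f y ≠ y → φ (f y) < φ y) (x : α) :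
    ∃ s, f^[s + 1] x = f^[s] x := by
  by_contra! hmoves
  have hanti : StrictAnti fun s => φ (f^[s] x) := strictAnti_nat_of_succ_lt fun s => by
    simpa only [iterate_succ_apply'] using hφ _ (by simpa only [iterate_succ_apply'] using hmoves s)
  exact not_injective_infinite_finite (fun s => f^[s] x) fun a b hab => hanti.injective (congrArg φ hab)

theorem Matrix.dotProduct_mulVec_add_single {ι R : Type*} [Fintype ι] [DecidableEq ι] [CommRing R]
    {A : Matrix ι ι R} (hA : A.IsSymm) (hdiag : ∀ i, A i i = 0) (b : ι → R) (i : ι) (d : R) :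
    (b + Pi.single i d) ⬝ᵥ (A *ᵥ (b + Pi.single i d))
      = b ⬝ᵥ (A *ᵥ b) + 2 * d * (A *ᵥ b) i := by
  have hcross : b ⬝ᵥ (A *ᵥ Pi.single i d) = d * (A *ᵥ b) i := by
    rw [dotProduct_mulVec, dotProduct_single, ← mulVec_transpose, hA.eq, mul_comm]
  have hsq : Pi.single i d ⬝ᵥ (A *ᵥ Pi.single i d) = 0 := by
    simp [single_dotProduct, mulVec_single, hdiag]
  rw [mulVec_add, add_dotProduct, dotProduct_add, dotProduct_add, hcross, hsq, single_dotProduct]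
  ring

theorem Bool.toInt_comp_update {ι : Type*} [DecidableEq ι] (x : ι → Bool) (v : ι) (b : Bool) :
    Bool.toInt ∘ Function.update x v b = Bool.toInt ∘ x + Pi.single v (b.toInt - (x v).toInt) := by
  ext u
  rcases eq_or_ne u v with rfl | huv <;> simp [*]

section Energy

variable {n : ℕ} (G : SimpleGraph (Fin n)) [DecidableRel G.Adj]

theorem sigmaLoc_eq_adjMatrix_mulVec_add (x : Fin n → Bool) (v : Fin n) :
    (sigmaLoc G x v : ℤ) = (G.adjMatrix ℤ *ᵥ (Bool.toInt ∘ x)) v + (x v).toInt := by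
  have hset : {u | G.Adj v u ∧ x u = true} = ↑((G.neighborFinset v).filter (x · = true)) := by
    ext u; simp
  have htoInt (b : Bool) : b.toInt = if b = true then 1 else 0 := by cases b <;> rfl
  simp only [sigmaLoc, hset, Set.ncard_coe_finset, SimpleGraph.adjMatrix_mulVec_apply,
    Function.comp_apply, htoInt, Finset.sum_boole]
  push_cast
  rfl

def energy (kdown : Fin n → ℕ) (x : Fin n → Bool) : ℤ :=
  (Bool.toInt ∘ x) ⬝ᵥ (fun v => 2 * (kdown v : ℤ) - 3)
    - (Bool.toInt ∘ x) ⬝ᵥ (G.adjMatrix ℤ *ᵥ (Bool.toInt ∘ x))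

theorem energy_update (kdown : Fin n → ℕ) (x : Fin n → Bool) (v : Fin n) (b : Bool) :
    energy G kdown (Function.update x v b) = energy G kdown x
      + (b.toInt - (x v).toInt) * (2 * kdown v - 3 - 2 * (G.adjMatrix ℤ *ᵥ (Bool.toInt ∘ x)) v) := by
  rw [energy, energy, Bool.toInt_comp_update, Matrix.dotProduct_mulVec_add_single (G.isSymm_adjMatrix)
    (by simp), add_dotProduct, single_dotProduct]
  ring

theorem energy_localStep_lt {kup kdown : Fin n → ℕ} {x : Fin n → Bool} {v : Fin n}
    (hΔ : (kdown v : ℤ) - kup v ≤ 1) (hx : localStep G kup kdown x v ≠ x) :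
    energy G kdown (localStep G kup kdown x v) < energy G kdown x := by
  have hσ := sigmaLoc_eq_adjMatrix_mulVec_add G x v
  unfold localStep at hx ⊢
  cases hxv : x v
  · have hup : kup v ≤ sigmaLoc G x v := by
      by_contra h
      simp [hxv, h] at hx
    have hup' : (kup v : ℤ) ≤ sigmaLoc G x v := by exact_mod_cast hup
    simp only [hup, Bool.false_eq_true, if_true, if_false]
    rw [energy_update, hxv]
    simp only [hxv, Bool.toInt_true, Bool.toInt_false] at hσ ⊢
    linarith
  · have hdown : sigmaLoc G x v < kdown v := by
      by_contra h
      simp [hxv, h] at hx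
    have hdown' : (sigmaLoc G x v : ℤ) < kdown v := by exact_mod_cast hdown
    simp only [hdown, if_true]
    rw [energy_update, hxv]
    simp only [hxv, Bool.toInt_true, Bool.toInt_false] at hσ ⊢
    linarith

theorem energy_sdsMap_lt {kup kdown : Fin n → ℕ} (hΔ : ∀ v, (kdown v : ℤ) - kup v ≤ 1)
    (l : List (Fin n)) {x : Fin n → Bool} (hx : sdsMap G kup kdown l x ≠ x) :
    energy G kdown (sdsMap G kup kdown l x) < energy G kdown x :=
  List.apply_foldl_lt_of_foldl_ne (fun _ v => energy_localStep_lt G (hΔ v)) l x hx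

end Energy

/-- for a sequential (permutation) bi-threshold dynamical system whose
thresholds satisfy `kdown v - kup v ≤ 1` at every vertex, every trajectory reaches a fixed
point: for every state `x` there is `s` with `F_π^[s+1] x = F_π^[s] x`, i.e. `F_π` only
has fixed points as limit sets. -/
theorem bithreshold_sds_fixed_points_of_delta_le_one
    (n : ℕ) (G : SimpleGraph (Fin n)) (kup kdown : Fin n → ℕ)
    (hΔ : ∀ v : Fin n, (kdown v : ℤ) - (kup v : ℤ) ≤ 1)
    (π : Equiv.Perm (Fin n)) :
    ∀ x : Fin n → Bool, ∃ s : ℕ,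
      (sdsMap G kup kdown (List.ofFn fun i => π i))^[s + 1] x
        = (sdsMap G kup kdown (List.ofFn fun i => π i))^[s] x := by
  classical exact Function.exists_iterate_succ_eq_of_lt_of_ne fun _ => energy_sdsMap_lt G hΔ _
end

section
/- Let X be a finite undirected simple graph with bi-threshold vertex functions, let v be a vertex, and let x ∈ {0,1}^n with x_v = 0 be such that applying the X-local function F_v changes the state of v from 0 to 1. Then P(F_v(x)) − P(x) ≤ (k↓_v − k↑_v) − 2. -/
/-- The system potential: each vertex `v` contributes `kdown v` if it is in state `1` and
`d(v) + 2 - kup v` if it is in state `0`; each edge contributes `1` if its endpoints are in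
different states and `0` otherwise. -/
noncomputable def potential {n : ℕ} (G : SimpleGraph (Fin n)) (kup kdown : Fin n → ℕ)
    (x : Fin n → Bool) : ℤ :=
  (∑ v : Fin n,
      (if x v = true then (kdown v : ℤ) else ((G.neighborSet v).ncard : ℤ) + 2 - (kup v : ℤ)))
  + ({e : Sym2 (Fin n) | e ∈ G.edgeSet ∧ ∃ u w : Fin n, e = s(u, w) ∧ x u ≠ x w}.ncard : ℤ)

/-!
Setting `v` to `1` trades the vertex potential `d(v) + 2 - k↑_v` for `k↓_v`, and on the edges at
`v` it trades the `m` discordant edges to neighbours in state `1` for the `d(v) - m` edges to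
neighbours in state `0`; all other edges are unaffected. The total change is
`k↓_v + k↑_v - 2 - 2m`, and the threshold rule fired, so `k↑_v ≤ σ(x[v]) = m`.
-/

theorem Fintype.sum_apply_update_sub {ι M : Type*} [Fintype ι] [DecidableEq ι] [AddCommGroup M]
    {α : ι → Type*} (f : ∀ i, α i → M) (x : ∀ i, α i) (v : ι) (b : α v) :
    ∑ u, f u (Function.update x v b u) - ∑ u, f u (x u) = f v b - f v (x v) := by
  simp_rw [Function.apply_update]
  rw [Finset.sum_update_of_mem (Finset.mem_univ v),
    Finset.sum_eq_add_sum_sdiff_singleton_of_mem (Finset.mem_univ v)]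
  abel

namespace SimpleGraph

variable {V β : Type*} (G : SimpleGraph V)

def discordantEdges (x : V → β) : Set (Sym2 V) :=
  {e | e ∈ G.edgeSet ∧ ∃ u w : V, e = s(u, w) ∧ x u ≠ x w}

variable {G}

theorem mk_mem_discordantEdges {x : V → β} {a b : V} :
    s(a, b) ∈ G.discordantEdges x ↔ G.Adj a b ∧ x a ≠ x b := by
  refine and_congr_right fun _ => ⟨?_, fun h => ⟨a, b, rfl, h⟩⟩
  rintro ⟨u, w, he, hne⟩
  rcases Sym2.eq_iff.mp he with ⟨rfl, rfl⟩ | ⟨rfl, rfl⟩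
  exacts [hne, hne.symm]

theorem discordantEdges_inter_incident (x : V → β) (v : V) :
    G.discordantEdges x ∩ {e | v ∈ e} = Sym2.mkEmbedding v '' {u | G.Adj v u ∧ x u ≠ x v} := by
  ext e
  induction e using Sym2.ind with
  | _ a b =>
    simp only [Set.mem_inter_iff, mk_mem_discordantEdges, Set.mem_image, Sym2.mkEmbedding_apply,
      Set.mem_ofPred_eq, Sym2.mem_iff]
    constructor
    · rintro ⟨⟨hadj, hne⟩, rfl | rfl⟩
      · exact ⟨b, ⟨hadj, Ne.symm hne⟩, rfl⟩
      · exact ⟨a, ⟨hadj.symm, hne⟩, Sym2.eq_swap⟩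
    · rintro ⟨u, ⟨hadj, hne⟩, he⟩
      rcases Sym2.eq_iff.mp he with ⟨rfl, rfl⟩ | ⟨rfl, rfl⟩
      exacts [⟨⟨hadj, Ne.symm hne⟩, .inl rfl⟩, ⟨⟨hadj.symm, hne⟩, .inr rfl⟩]

theorem ncard_discordantEdges_inter_incident (x : V → β) (v : V) :
    (G.discordantEdges x ∩ {e | v ∈ e}).ncard = {u | G.Adj v u ∧ x u ≠ x v}.ncard := by
  rw [discordantEdges_inter_incident, Set.ncard_image_of_injective _ (Sym2.mkEmbedding v).injective]

theorem discordantEdges_diff_incident_congr {x y : V → β} {v : V} (h : ∀ u ≠ v, x u = y u) :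
    G.discordantEdges x \ {e | v ∈ e} = G.discordantEdges y \ {e | v ∈ e} := by
  ext e
  induction e using Sym2.ind with
  | _ a b =>
    simp only [Set.mem_sdiff, mk_mem_discordantEdges, Set.mem_ofPred_eq, Sym2.mem_iff, not_or]
    refine and_congr_left fun ⟨ha, hb⟩ => ?_
    rw [h a (Ne.symm ha), h b (Ne.symm hb)]

theorem ncard_discordantEdges_update [Finite V] [DecidableEq V] (x : V → β) (v : V) (b : β) :
    ((G.discordantEdges (Function.update x v b)).ncard : ℤ) - (G.discordantEdges x).ncard
      = {u | G.Adj v u ∧ x u ≠ b}.ncard - {u | G.Adj v u ∧ x u ≠ x v}.ncard := by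
  have hsplit (z : V → β) : (G.discordantEdges z).ncard
      = (G.discordantEdges z ∩ {e | v ∈ e}).ncard + (G.discordantEdges z \ {e | v ∈ e}).ncard :=
    (Set.ncard_inter_add_ncard_sdiff_eq_ncard _ _).symm
  have hnbr : {u | G.Adj v u ∧ Function.update x v b u ≠ Function.update x v b v}
      = {u | G.Adj v u ∧ x u ≠ b} := by
    ext u
    simp +contextual [Function.update_of_ne (G.ne_of_adj _).symm]
  rw [hsplit, hsplit x, ncard_discordantEdges_inter_incident, ncard_discordantEdges_inter_incident,
    hnbr, discordantEdges_diff_incident_congr (fun u hu => Function.update_of_ne hu b x)]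
  push_cast
  ring

theorem ncard_neighborSet_eq_add [Finite V] (x : V → β) (v : V) (b : β) :
    (G.neighborSet v).ncard = {u | G.Adj v u ∧ x u = b}.ncard + {u | G.Adj v u ∧ x u ≠ b}.ncard :=
  (Set.ncard_inter_add_ncard_sdiff_eq_ncard _ _).symm

end SimpleGraph

section BiThreshold

variable {n : ℕ} (G : SimpleGraph (Fin n)) (kup kdown : Fin n → ℕ)

noncomputable def vertexPotential (v : Fin n) (b : Bool) : ℤ :=
  if b = true then kdown v else (G.neighborSet v).ncard + 2 - kup v

theorem potential_update_sub (x : Fin n → Bool) (v : Fin n) (b : Bool) :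
    potential G kup kdown (Function.update x v b) - potential G kup kdown x
      = vertexPotential G kup kdown v b - vertexPotential G kup kdown v (x v)
        + ({u | G.Adj v u ∧ x u ≠ b}.ncard - {u | G.Adj v u ∧ x u ≠ x v}.ncard) := by
  have hpot (z : Fin n → Bool) : potential G kup kdown z
      = ∑ u, vertexPotential G kup kdown u (z u) + (G.discordantEdges z).ncard := rfl
  rw [hpot, hpot]
  linear_combination Fintype.sum_apply_update_sub (vertexPotential G kup kdown) x v b
    + G.ncard_discordantEdges_update x v b

variable {G kup kdown}

theorem localStep_eq_update (x : Fin n → Bool) (v : Fin n) :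
    localStep G kup kdown x v = Function.update x v (localStep G kup kdown x v v) := by
  unfold localStep
  rw [Function.update_self]

theorem sigmaLoc_of_false {x : Fin n → Bool} {v : Fin n} (hxv : x v = false) :
    sigmaLoc G x v = {u | G.Adj v u ∧ x u = true}.ncard := by
  simp [sigmaLoc, hxv]

theorem kup_le_sigmaLoc_of_up {x : Fin n → Bool} {v : Fin n} (hxv : x v = false)
    (hup : localStep G kup kdown x v v = true) : kup v ≤ sigmaLoc G x v := by
  simpa [localStep, hxv] using hup

end BiThreshold

/-- if applying the local function `F_v` changes the state of `v` from `0`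
to `1`, then the system potential changes by at most `(kdown v - kup v) - 2`. -/
theorem potential_drop_up_transition
    (n : ℕ) (G : SimpleGraph (Fin n)) (kup kdown : Fin n → ℕ)
    (v : Fin n) (x : Fin n → Bool)
    (hxv : x v = false)
    (hchange : localStep G kup kdown x v v = true) :
    potential G kup kdown (localStep G kup kdown x v) - potential G kup kdown x
      ≤ ((kdown v : ℤ) - (kup v : ℤ)) - 2 := by
  have hk := kup_le_sigmaLoc_of_up hxv hchange
  rw [sigmaLoc_of_false hxv] at hk
  have hdeg := G.ncard_neighborSet_eq_add x v true
  rw [localStep_eq_update, hchange, potential_update_sub, hxv]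
  simp only [vertexPotential, ne_eq, Bool.not_eq_false, if_true, Bool.false_eq_true, if_false]
    at hdeg ⊢
  push_cast [hdeg]
  omega
end

section
/- Let n ≥ 3, let X = Circ_n be the cycle graph on vertices {1,…,n}, let every vertex have up-threshold k↑ = 1 and down-threshold k↓ = 3, and let π = (1,2,…,n). Then the state x = (0,0,…,0,1,0) (a single 1 in position n−1) is a periodic point of the SDS map F_π of period exactly n−1; in particular F_π has a cycle of length n−1. -/
/-- The cycle graph `Circ_n` on `Fin n` (vertex `i` of the paper corresponds to `i - 1`):
vertices `v` and `w` are adjacent iff they are (cyclically) consecutive. -/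
def circGraph (n : ℕ) : SimpleGraph (Fin n) :=
  SimpleGraph.fromRel (fun v w => (v.val + 1) % n = w.val)

/-!
With `k↑ = 1` and `k↓ = 3` on a cycle, a vertex in state 0 switches on as soon as one neighbour is
on, and a vertex in state 1 stays on only if both neighbours are on. In the sweep `0, 1, …, n - 1`
a single `1` at index `m + 1` therefore first lights index `m` and is then switched off: it moves
one step back. When it reaches index `1`, the next sweep also lights index `n - 1` across the edge
`{n - 1, 0}`, and the following sweep turns `{0, n - 1}` back into the single `1` at `n - 2`. So
the orbit of the single `1` at `n - 2` runs through `n - 1` distinct states.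
-/

theorem List.foldl_finRange_eq_of_step {α : Type*} {n : ℕ} (f : α → Fin n → α) (Y : ℕ → α)
    (hstep : ∀ j (hj : j < n), f (Y j) ⟨j, hj⟩ = Y (j + 1)) :
    (List.finRange n).foldl f (Y 0) = Y n := by
  induction n with
  | zero => rfl
  | succ n ih =>
    rw [List.finRange_succ_last, List.foldl_append, List.foldl_map,
      ih _ fun j hj => hstep j (by omega)]
    exact hstep n n.lt_succ_self

theorem Set.ncard_pair_filter {α : Type*} {a b : α} (hab : a ≠ b) (p : α → Prop)
    [DecidablePred p] :
    {u | (u = a ∨ u = b) ∧ p u}.ncard = (if p a then 1 else 0) + (if p b then 1 else 0) := by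
  classical
  have : {u | (u = a ∨ u = b) ∧ p u} = ↑(({a, b} : Finset α).filter p) := by ext; simp
  rw [this, Set.ncard_coe_finset, Finset.card_filter, Finset.sum_pair hab]

namespace Fin

variable {n : ℕ} [NeZero n]

theorem val_add_one_eq_ite (v : Fin n) :
    (v + 1).val = if v.val = n - 1 then 0 else v.val + 1 := by
  obtain ⟨m, rfl⟩ : ∃ m, n = m + 1 := ⟨n - 1, (Nat.succ_pred_eq_of_ne_zero (NeZero.ne n)).symm⟩
  simp only [val_add_one, Fin.ext_iff, val_last, add_tsub_cancel_right]

theorem val_sub_one_eq_ite (v : Fin n) :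
    (v - 1).val = if v.val = 0 then n - 1 else v.val - 1 := by
  obtain ⟨m, rfl⟩ : ∃ m, n = m + 1 := ⟨n - 1, (Nat.succ_pred_eq_of_ne_zero (NeZero.ne n)).symm⟩
  simp only [coe_sub_one, Fin.ext_iff, val_zero, add_tsub_cancel_right]

theorem add_one_ne_self (hn : 2 ≤ n) (v : Fin n) : v + 1 ≠ v := by
  rw [Ne, add_eq_left, Fin.ext_iff, val_one', val_zero, Nat.mod_eq_of_lt hn]
  exact one_ne_zero

theorem add_one_ne_sub_one (hn : 3 ≤ n) (v : Fin n) : v + 1 ≠ v - 1 := by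
  rw [Ne, ← sub_eq_zero, add_sub_sub_cancel, Fin.ext_iff, val_add, val_one', val_zero,
    Nat.mod_eq_of_lt (by omega : 1 < n), Nat.mod_eq_of_lt hn]
  exact two_ne_zero

end Fin

/-- The bi-threshold rule with `k↑ = 1` and `k↓ = 3` at a vertex of degree two. -/
def rule13 (left mid right : Bool) : Bool := if mid then left && right else left || right

theorem rule13_decide (A B C : Prop) [Decidable A] [Decidable B] [Decidable C] :
    rule13 (decide A) (decide B) (decide C) = decide ((B ∧ A ∧ C) ∨ (¬B ∧ (A ∨ C))) := by
  by_cases B <;> simp [rule13, *]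

namespace circGraph

variable {n : ℕ} [NeZero n]

theorem adj_iff (hn : 2 ≤ n) {v u : Fin n} :
    (circGraph n).Adj v u ↔ u = v + 1 ∨ u = v - 1 := by
  have hsucc : ∀ w : Fin n, (w + 1).val = (w.val + 1) % n := fun w => by
    rw [Fin.val_add, Fin.val_one', Nat.add_mod_mod]
  simp only [circGraph, SimpleGraph.fromRel_adj, ← hsucc, ← Fin.ext_iff, eq_sub_iff_add_eq]
  refine ⟨fun h => h.2.imp Eq.symm id, fun h => ⟨?_, h.imp Eq.symm id⟩⟩
  rintro rfl
  exact h.elim (fun e => Fin.add_one_ne_self hn v e.symm) (Fin.add_one_ne_self hn v)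

theorem sigmaLoc_eq (hn : 3 ≤ n) (x : Fin n → Bool) (v : Fin n) :
    sigmaLoc (circGraph n) x v
      = (if x (v + 1) then 1 else 0) + (if x (v - 1) then 1 else 0) + (if x v then 1 else 0) := by
  simp only [sigmaLoc, adj_iff (by omega : 2 ≤ n),
    Set.ncard_pair_filter (Fin.add_one_ne_sub_one hn v)]

theorem localStep_eq (hn : 3 ≤ n) (x : Fin n → Bool) (v : Fin n) :
    localStep (circGraph n) (fun _ => 1) (fun _ => 3) x v
      = Function.update x v (rule13 (x (v - 1)) (x v) (x (v + 1))) := by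
  rw [localStep, sigmaLoc_eq hn]
  cases x (v - 1) <;> cases x v <;> cases x (v + 1) <;> rfl

/-- `P j u` describes the state of vertex `u` after the first `j` local updates of the sweep;
`l` and `r` are the cyclic neighbours of vertex `j`. -/
theorem sdsMap_finRange_eq_of_sweep (hn : 3 ≤ n) (P : ℕ → ℕ → Prop) [∀ j u, Decidable (P j u)]
    (hfar : ∀ j < n, ∀ u < n, u ≠ j → (P (j + 1) u ↔ P j u))
    (hnear : ∀ j < n, ∀ l r, (j = 0 ∧ l + 1 = n ∨ l + 1 = j) →
      (j + 1 = n ∧ r = 0 ∨ r = j + 1 ∧ r < n) →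
      (P (j + 1) j ↔ (P j j ∧ P j l ∧ P j r) ∨ (¬ P j j ∧ (P j l ∨ P j r))))
    {x y : Fin n → Bool} (hx : ∀ v, x v = true ↔ P 0 v) (hy : ∀ v, y v = true ↔ P n v) :
    sdsMap (circGraph n) (fun _ => 1) (fun _ => 3) (List.finRange n) x = y := by
  obtain rfl : x = fun v => decide (P 0 v.val) := funext fun v => by simp [← hx]
  obtain rfl : y = fun v => decide (P n v.val) := funext fun v => by simp [← hy]
  refine List.foldl_finRange_eq_of_step _ (fun j (v : Fin n) => decide (P j v.val)) fun j hj => ?_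
  rw [localStep_eq hn, Function.update_eq_iff]
  refine ⟨?_, fun u hu => ?_⟩
  · have hl : ((⟨j, hj⟩ : Fin n) - 1).val = if j = 0 then n - 1 else j - 1 :=
      Fin.val_sub_one_eq_ite _
    have hr : ((⟨j, hj⟩ : Fin n) + 1).val = if j = n - 1 then 0 else j + 1 :=
      Fin.val_add_one_eq_ite _
    rw [rule13_decide]
    exact decide_eq_decide.2 (hnear j hj _ _ (by split_ifs at hl <;> omega)
      (by split_ifs at hr <;> omega)).symm
  · exact decide_eq_decide.2 (hfar j hj u u.isLt fun h => hu (Fin.ext h)).symm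

theorem sdsMap_single {m : ℕ} (hm : m + 3 ≤ n) :
    sdsMap (circGraph n) (fun _ => 1) (fun _ => 3) (List.finRange n)
        (fun v => decide (v.val = m + 1))
      = fun v => decide (v.val = m ∨ (m = 0 ∧ v.val + 1 = n)) :=
  sdsMap_finRange_eq_of_sweep (by omega)
    (fun j u => (u = m ∧ m < j) ∨ (u = m + 1 ∧ j ≤ m + 1) ∨ (m = 0 ∧ u + 1 = n ∧ n ≤ j))
    (by grind) (by grind) (by grind) (by grind)

theorem sdsMap_ends (hn : 3 ≤ n) :
    sdsMap (circGraph n) (fun _ => 1) (fun _ => 3) (List.finRange n)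
        (fun v => decide (v.val = 0 ∨ v.val + 1 = n))
      = fun v => decide (v.val + 2 = n) :=
  sdsMap_finRange_eq_of_sweep hn
    (fun j u => (u = 0 ∧ j = 0) ∨ (u + 1 = n ∧ j < n) ∨ (u + 2 = n ∧ n ≤ j + 1))
    (by grind) (by grind) (by grind) (by grind)

theorem iterate_sdsMap_single (hn : 3 ≤ n) {k : ℕ} (hk : k + 2 ≤ n) :
    (sdsMap (circGraph n) (fun _ => 1) (fun _ => 3) (List.finRange n))^[k]
        (fun v => decide (v.val + 2 = n))
      = fun v => decide (v.val + 2 + k = n ∨ (k + 2 = n ∧ v.val + 1 = n)) := by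
  induction k with
  | zero => funext v; exact decide_eq_decide.2 (by omega)
  | succ k ih =>
    have h_single : (fun v : Fin n => decide (v.val + 2 + k = n ∨ (k + 2 = n ∧ v.val + 1 = n)))
        = fun v => decide (v.val = (n - 3 - k) + 1) :=
      funext fun v => decide_eq_decide.2 (by omega)
    rw [Function.iterate_succ_apply', ih (by omega), h_single, sdsMap_single (by omega)]
    funext v
    exact decide_eq_decide.2 (by omega)

end circGraph

/-- The paper's state `(0, …, 0, 1, 0)` is the indicator of index `n - 2` of `Fin n`. -/
theorem circ_bithreshold_cycle_length
    (n : ℕ) (hn : 3 ≤ n) :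
    (sdsMap (circGraph n) (fun _ => 1) (fun _ => 3) (List.finRange n))^[n - 1]
        (fun v : Fin n => decide (v.val = n - 2))
      = (fun v : Fin n => decide (v.val = n - 2)) ∧
    ∀ p : ℕ, 0 < p → p < n - 1 →
      (sdsMap (circGraph n) (fun _ => 1) (fun _ => 3) (List.finRange n))^[p]
          (fun v : Fin n => decide (v.val = n - 2))
        ≠ (fun v : Fin n => decide (v.val = n - 2)) := by
  have : NeZero n := ⟨by omega⟩
  have hx : (fun v : Fin n => decide (v.val = n - 2)) = fun v => decide (v.val + 2 = n) :=
    funext fun v => decide_eq_decide.2 (by omega)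
  have h_ends : (fun v : Fin n => decide (v.val + 2 + (n - 2) = n ∨ (n - 2 + 2 = n ∧ v.val + 1 = n)))
      = fun v => decide (v.val = 0 ∨ v.val + 1 = n) :=
    funext fun v => decide_eq_decide.2 (by omega)
  rw [hx]
  refine ⟨?_, fun p hp hpn h => ?_⟩
  · rw [show n - 1 = n - 2 + 1 by omega, Function.iterate_succ_apply',
      circGraph.iterate_sdsMap_single hn (by omega), h_ends, circGraph.sdsMap_ends hn]
  · rw [circGraph.iterate_sdsMap_single hn (by omega)] at h
    have := congrFun h ⟨n - 2, by omega⟩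
    simp only [decide_eq_decide] at this
    omega
end

section
/- Let c ≥ 3 be an integer, set β = c−1, n = 3β+1 = 3c−2, and η = β+1. Let Y_n be the Y-tree on vertex set {1,…,n} with edges {i, i+1} for 1 ≤ i ≤ 2η−2, edges {i, i+1} for 2η ≤ i ≤ n−1, and the edge {η, n}. Assign every vertex the thresholds (k↑, k↓) = (1, 3), and let π = (1, 2, …, n). Then the SDS map F_π over Y_n has a periodic orbit of length c. -/
/-- The Y-tree `Y_n` on `n = 3c - 2` vertices (`c ≥ 3`, `η = c`), 0-indexed: the paper's
vertex `i` corresponds to `i - 1`. Its edges are the path edges `{j, j+1}` (all `j` except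
`j = 2η - 2 = 2c - 2`, 0-indexed) together with the edge `{η, n} = {c, 3c - 2}`
(0-indexed: `{c - 1, 3c - 3}`). -/
def yTree (c : ℕ) : SimpleGraph (Fin (3 * c - 2)) :=
  SimpleGraph.fromRel (fun v w =>
    (w.val = v.val + 1 ∧ v.val ≠ 2 * c - 2) ∨ (v.val = c - 1 ∧ w.val = 3 * c - 3))


/-! The sweep `π = (1, …, n)` updates the vertices in increasing order, so when vertex `k` is
updated its lower neighbours already carry their new state and its upper neighbours their old
one. With thresholds `(1, 3)` an inactive vertex switches on iff some neighbour is active and an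
active vertex stays on iff at least two neighbours are. The orbit is written down explicitly
(`CycleActive`): its active sets are unions of intervals with endpoints linear in `c`, so checking
the sweep rule on them, vertex by vertex, is linear arithmetic in `c`, `i` and `k`. -/

section Sweep

variable {N : ℕ} (G : SimpleGraph (Fin N)) (kup kdown : Fin N → ℕ)

theorem foldl_take_finRange_localStep {x y : Fin N → Bool}
    (h : ∀ v, localStep G kup kdown (fun u => if u < v then y u else x u) v v = y v) :
    ∀ k ≤ N, ((List.finRange N).take k).foldl (localStep G kup kdown) x =
      fun u => if u.val < k then y u else x u := by
  intro k hk
  induction k with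
  | zero => funext u; simp
  | succ k ih =>
    have hget : (List.finRange N)[k]? = some ⟨k, hk⟩ := by
      rw [List.getElem?_eq_getElem (by simpa using hk)]
      simp
    rw [List.take_add_one, hget, List.foldl_append, ih (by omega)]
    simp only [Option.toList_some, List.foldl_cons, List.foldl_nil]
    funext u
    by_cases hu : u = ⟨k, hk⟩
    · subst hu
      exact (h ⟨k, hk⟩).trans (by simp)
    · have hne : u.val ≠ k := fun h' => hu (Fin.ext h')
      simp only [localStep, Function.update_of_ne hu]
      split_ifs <;> first | rfl | omega

theorem sdsMap_finRange_eq {x y : Fin N → Bool}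
    (h : ∀ v, localStep G kup kdown (fun u => if u < v then y u else x u) v v = y v) :
    sdsMap G kup kdown (List.finRange N) x = y := by
  have hfold := foldl_take_finRange_localStep G kup kdown h N le_rfl
  rw [List.take_of_length_le (by simp)] at hfold
  funext u
  simp [sdsMap, hfold, u.isLt]

end Sweep

theorem localStep_one_three_self_eq_true_iff {N : ℕ} (G : SimpleGraph (Fin N))
    (m : Fin N → Bool) (v : Fin N) :
    localStep G (fun _ => 1) (fun _ => 3) m v v = true ↔
      (m v = true ∧ 1 < {u | G.Adj v u ∧ m u = true}.ncard) ∨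
      (m v = false ∧ 0 < {u | G.Adj v u ∧ m u = true}.ncard) := by
  unfold localStep sigmaLoc
  rw [Function.update_self]
  cases m v <;> simp <;> omega

section YTreeRule

variable {c : ℕ}

theorem yTree_adj_iff (hc : 2 ≤ c) (v u : Fin (3 * c - 2)) :
    (yTree c).Adj v u ↔
      (u.val = v + 1 ∧ v + 2 ≠ 2 * c) ∨ (u.val = v - 1 ∧ 1 ≤ v.val ∧ v + 1 ≠ 2 * c) ∨
      (u.val = 3 * c - 3 ∧ v + 1 = c) ∨ (u.val = c - 1 ∧ v + 3 = 3 * c) := by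
  have := v.isLt
  have := u.isLt
  simp only [yTree, SimpleGraph.fromRel_adj, ne_eq, Fin.ext_iff]
  omega

variable (c)

/- The three possible neighbours of `k` in `yTree c`: `k + 1` and `k - 1` along the path (which
is cut between `2c - 2` and `2c - 1`), and the partner of `k` under the edge `{c - 1, 3c - 3}`.
Neighbours above `k` are read in `L`, those below `k` in `E`. -/

def NextActive (L : ℕ → Prop) (k : ℕ) : Prop := k + 2 ≠ 2 * c ∧ k + 3 < 3 * c ∧ L (k + 1)

def PrevActive (E : ℕ → Prop) (k : ℕ) : Prop := 1 ≤ k ∧ k + 1 ≠ 2 * c ∧ E (k - 1)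

def LinkActive (L E : ℕ → Prop) (k : ℕ) : Prop :=
  (k + 1 = c ∧ L (3 * c - 3)) ∨ (k + 3 = 3 * c ∧ E (c - 1))

def YTreeRule (L E : ℕ → Prop) (k : ℕ) (self : Prop) : Prop :=
  (self ∧ ((NextActive c L k ∧ PrevActive c E k) ∨ (NextActive c L k ∧ LinkActive c L E k) ∨
    (PrevActive c E k ∧ LinkActive c L E k))) ∨
  (¬self ∧ (NextActive c L k ∨ PrevActive c E k ∨ LinkActive c L E k))

variable {c}

theorem yTreeRule_of_pos {L E : ℕ → Prop} {k : ℕ} {self : Prop} (hs : self) :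
    YTreeRule c L E k self ↔ (NextActive c L k ∧ PrevActive c E k) ∨
      (NextActive c L k ∧ LinkActive c L E k) ∨ (PrevActive c E k ∧ LinkActive c L E k) := by
  simp [YTreeRule, hs]

theorem yTreeRule_of_neg {L E : ℕ → Prop} {k : ℕ} {self : Prop} (hs : ¬self) :
    YTreeRule c L E k self ↔ NextActive c L k ∨ PrevActive c E k ∨ LinkActive c L E k := by
  simp [YTreeRule, hs]

theorem yTreeRule_congr (hc : 2 ≤ c) {L L' E E' : ℕ → Prop} {k : ℕ} (self : Prop)
    (hL : ∀ a, k < a → (L a ↔ L' a)) (hE : ∀ a < k, E a ↔ E' a) :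
    YTreeRule c L E k self ↔ YTreeRule c L' E' k self := by
  have hNext : NextActive c L k ↔ NextActive c L' k :=
    and_congr_right' (and_congr_right' (hL _ k.lt_succ_self))
  have hPrev : PrevActive c E k ↔ PrevActive c E' k :=
    and_congr_right fun _ => and_congr_right' (hE _ (by omega))
  have hLink : LinkActive c L E k ↔ LinkActive c L' E' k :=
    or_congr (and_congr_right fun _ => hL _ (by omega))
      (and_congr_right fun _ => hE _ (by omega))
  simp only [YTreeRule, hNext, hPrev, hLink]

theorem exists_yTree_adj_iff (hc : 2 ≤ c) {m : Fin (3 * c - 2) → Bool} {M : ℕ → Prop}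
    (hM : ∀ u, m u = true ↔ M u) (v : Fin (3 * c - 2)) :
    (∃ u, (yTree c).Adj v u ∧ m u = true) ↔
      NextActive c M v ∨ PrevActive c M v ∨ LinkActive c M M v := by
  simp only [yTree_adj_iff hc, hM, Fin.exists_iff, exists_prop, or_and_right, exists_or,
    existsAndEq, NextActive, PrevActive, LinkActive]
  grind

theorem exists_two_yTree_adj_iff (hc : 2 ≤ c) {m : Fin (3 * c - 2) → Bool} {M : ℕ → Prop}
    (hM : ∀ u, m u = true ↔ M u) (v : Fin (3 * c - 2)) :
    (∃ u w, ((yTree c).Adj v u ∧ m u = true) ∧ ((yTree c).Adj v w ∧ m w = true) ∧ u ≠ w) ↔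
      (NextActive c M v ∧ PrevActive c M v) ∨ (NextActive c M v ∧ LinkActive c M M v) ∨
        (PrevActive c M v ∧ LinkActive c M M v) := by
  simp only [yTree_adj_iff hc, hM, Fin.exists_iff, exists_prop, ne_eq, Fin.ext_iff,
    or_and_right, and_or_left, exists_or, existsAndEq, NextActive, PrevActive, LinkActive]
  grind (splits := 40)

theorem yTree_localStep_self_eq_true_iff (hc : 2 ≤ c) {m : Fin (3 * c - 2) → Bool}
    {M : ℕ → Prop} (hM : ∀ u, m u = true ↔ M u) (v : Fin (3 * c - 2)) :
    localStep (yTree c) (fun _ => 1) (fun _ => 3) m v v = true ↔ YTreeRule c M M v (M v) := by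
  have hfin := Set.toFinite {u | (yTree c).Adj v u ∧ m u = true}
  rw [localStep_one_three_self_eq_true_iff, Set.one_lt_ncard_iff hfin, Set.ncard_pos hfin]
  simp only [Set.mem_ofPred_eq, Set.Nonempty]
  rw [exists_two_yTree_adj_iff hc hM, exists_yTree_adj_iff hc hM, YTreeRule, ← hM,
    Bool.not_eq_true]

theorem sdsMap_yTree_eq (hc : 2 ≤ c) {x y : Fin (3 * c - 2) → Bool} {X Y : ℕ → Prop}
    (hX : ∀ v, x v = true ↔ X v) (hY : ∀ v, y v = true ↔ Y v)
    (h : ∀ k < 3 * c - 2, Y k ↔ YTreeRule c X Y k (X k)) :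
    sdsMap (yTree c) (fun _ => 1) (fun _ => 3) (List.finRange (3 * c - 2)) x = y := by
  refine sdsMap_finRange_eq _ _ _ fun v => Bool.eq_iff_iff.mpr ?_
  let M a := (a < v.val ∧ Y a) ∨ (v.val ≤ a ∧ X a)
  have hM : ∀ u, (if u < v then y u else x u) = true ↔ M u := by
    intro u
    by_cases huv : u < v
    · simp [M, huv, hY, Fin.lt_def.mp huv]
    · simp [M, huv, hX, Fin.not_lt.mp huv]
  rw [yTree_localStep_self_eq_true_iff hc hM, hY, h v v.isLt]
  simp only [M, lt_irrefl, false_and, le_refl, true_and, false_or]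
  exact yTreeRule_congr hc _ (fun a ha => by simp [ha.le, not_lt_of_gt ha])
    (fun a ha => by simp [ha, not_le_of_gt ha])

end YTreeRule

section Orbit

variable {c : ℕ}

/-- Vertex `a` is active in the `i`-th point of the orbit. The hub is `c - 1`; its arms are
`[0, c - 2]`, `[c, 2c - 2]` and `[2c - 1, 3c - 3]`, the last attached at `3c - 3`. Point `0`:
the hub and the two nearest vertices of the third arm. Point `i` with `0 < i < c - 1`: the `i`
nearest vertices of the first arm, the hub, the `c - i` nearest of the second and, if
`i ≤ c - 3`, the `i + 2` nearest of the third. Point `c - 1`: the first arm, the hub and the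
nearest vertex of each other arm. -/
def CycleActive (c i a : ℕ) : Prop :=
  if i = 0 then a + 1 = c ∨ a + 4 = 3 * c ∨ a + 3 = 3 * c
  else if i = c - 1 then a ≤ c ∨ a + 3 = 3 * c
  else (c ≤ a + i + 1 ∧ a + i + 1 ≤ 2 * c) ∨ (i + 3 ≤ c ∧ 3 * c ≤ a + i + 4 ∧ a + 3 ≤ 3 * c)

instance (c i a : ℕ) : Decidable (CycleActive c i a) := by
  unfold CycleActive
  infer_instance

def cycleConf (c i : ℕ) : Fin (3 * c - 2) → Bool := fun v => decide (CycleActive c i v)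

theorem cycleActive_zero (a : ℕ) :
    CycleActive c 0 a ↔ a + 1 = c ∨ a + 4 = 3 * c ∨ a + 3 = 3 * c := by
  simp [CycleActive]

theorem cycleActive_last (hc : 2 ≤ c) (a : ℕ) :
    CycleActive c (c - 1) a ↔ a ≤ c ∨ a + 3 = 3 * c := by
  simp [CycleActive, show c - 1 ≠ 0 by omega]

theorem cycleActive_of_ne {i : ℕ} (h0 : i ≠ 0) (hl : i ≠ c - 1) (a : ℕ) :
    CycleActive c i a ↔
      (c ≤ a + i + 1 ∧ a + i + 1 ≤ 2 * c) ∨ (i + 3 ≤ c ∧ 3 * c ≤ a + i + 4 ∧ a + 3 ≤ 3 * c) := by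
  simp [CycleActive, h0, hl]

theorem yTreeRule_cycleActive_one (hc : 3 ≤ c) {k : ℕ} (hk : k < 3 * c - 2) :
    CycleActive c 1 k ↔
      YTreeRule c (CycleActive c 0) (CycleActive c 1) k (CycleActive c 0 k) := by
  by_cases hx : CycleActive c 0 k <;> [rw [yTreeRule_of_pos hx]; rw [yTreeRule_of_neg hx]] <;>
  simp only [NextActive, PrevActive, LinkActive, cycleActive_zero,
    cycleActive_of_ne one_ne_zero (show 1 ≠ c - 1 by omega)] at hx ⊢ <;>
  omega

theorem yTreeRule_cycleActive_mid (hc : 3 ≤ c) {i k : ℕ} (h0 : i ≠ 0) (hi : i + 2 < c)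
    (hk : k < 3 * c - 2) :
    CycleActive c (i + 1) k ↔
      YTreeRule c (CycleActive c i) (CycleActive c (i + 1)) k (CycleActive c i k) := by
  by_cases hx : CycleActive c i k <;> [rw [yTreeRule_of_pos hx]; rw [yTreeRule_of_neg hx]] <;>
  simp only [NextActive, PrevActive, LinkActive, cycleActive_of_ne h0 (show i ≠ c - 1 by omega),
    cycleActive_of_ne (show i + 1 ≠ 0 by omega) (show i + 1 ≠ c - 1 by omega)] at hx ⊢ <;>
  omega

theorem yTreeRule_cycleActive_last (hc : 3 ≤ c) {k : ℕ} (hk : k < 3 * c - 2) :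
    CycleActive c (c - 1) k ↔
      YTreeRule c (CycleActive c (c - 2)) (CycleActive c (c - 1)) k (CycleActive c (c - 2) k) := by
  by_cases hx : CycleActive c (c - 2) k <;> [rw [yTreeRule_of_pos hx]; rw [yTreeRule_of_neg hx]] <;>
  simp only [NextActive, PrevActive, LinkActive, cycleActive_last (by omega : 2 ≤ c),
    cycleActive_of_ne (show c - 2 ≠ 0 by omega) (show c - 2 ≠ c - 1 by omega)] at hx ⊢ <;>
  omega

theorem yTreeRule_cycleActive_wrap (hc : 3 ≤ c) {k : ℕ} (hk : k < 3 * c - 2) :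
    CycleActive c 0 k ↔
      YTreeRule c (CycleActive c (c - 1)) (CycleActive c 0) k (CycleActive c (c - 1) k) := by
  by_cases hx : CycleActive c (c - 1) k <;> [rw [yTreeRule_of_pos hx]; rw [yTreeRule_of_neg hx]] <;>
  simp only [NextActive, PrevActive, LinkActive, cycleActive_last (by omega : 2 ≤ c),
    cycleActive_zero] at hx ⊢ <;>
  omega

theorem yTreeRule_cycleActive_succ (hc : 3 ≤ c) {i k : ℕ} (hi : i + 1 < c)
    (hk : k < 3 * c - 2) :
    CycleActive c (i + 1) k ↔
      YTreeRule c (CycleActive c i) (CycleActive c (i + 1)) k (CycleActive c i k) := by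
  rcases Nat.eq_zero_or_pos i with rfl | hi0
  · exact yTreeRule_cycleActive_one hc hk
  · by_cases hlast : i + 2 = c
    · obtain rfl : i = c - 2 := by omega
      rw [show c - 2 + 1 = c - 1 by omega]
      exact yTreeRule_cycleActive_last hc hk
    · exact yTreeRule_cycleActive_mid hc hi0.ne' (by omega) hk

local notation "F" c => sdsMap (yTree c) (fun _ => 1) (fun _ => 3) (List.finRange (3 * c - 2))

theorem sdsMap_cycleConf_succ (hc : 3 ≤ c) {i : ℕ} (hi : i + 1 < c) :
    (F c) (cycleConf c i) = cycleConf c (i + 1) :=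
  sdsMap_yTree_eq (by omega) (fun _ => decide_eq_true_iff) (fun _ => decide_eq_true_iff)
    fun _ hk => yTreeRule_cycleActive_succ hc hi hk

theorem sdsMap_cycleConf_last (hc : 3 ≤ c) : (F c) (cycleConf c (c - 1)) = cycleConf c 0 :=
  sdsMap_yTree_eq (by omega) (fun _ => decide_eq_true_iff) (fun _ => decide_eq_true_iff)
    fun _ hk => yTreeRule_cycleActive_wrap hc hk

theorem iterate_cycleConf (hc : 3 ≤ c) {i : ℕ} (hi : i < c) :
    (F c)^[i] (cycleConf c 0) = cycleConf c i := by
  induction i with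
  | zero => rfl
  | succ i ih =>
    rw [Function.iterate_succ_apply', ih (by omega), sdsMap_cycleConf_succ hc hi]

theorem iterate_cycleConf_period (hc : 3 ≤ c) : (F c)^[c] (cycleConf c 0) = cycleConf c 0 := by
  calc (F c)^[c] (cycleConf c 0) = (F c) ((F c)^[c - 1] (cycleConf c 0)) := by
        rw [← Function.iterate_succ_apply' (F c), Nat.succ_eq_add_one, Nat.sub_add_cancel (by omega)]
    _ = cycleConf c 0 := by rw [iterate_cycleConf hc (by omega), sdsMap_cycleConf_last hc]

theorem cycleConf_ne_zero (hc : 3 ≤ c) {p : ℕ} (hp : 0 < p) (hpc : p < c) :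
    cycleConf c p ≠ cycleConf c 0 := by
  obtain ⟨a, ha, hpa, h0a⟩ : ∃ a < 3 * c - 2, CycleActive c p a ∧ ¬CycleActive c 0 a := by
    by_cases hl : p = c - 1
    · exact ⟨0, by omega, by simp [hl, cycleActive_last (by omega : 2 ≤ c)],
        by rw [cycleActive_zero]; omega⟩
    · exact ⟨c - 1 - p, by omega, by rw [cycleActive_of_ne hp.ne' hl]; omega,
        by rw [cycleActive_zero]; omega⟩
  intro h
  simpa [cycleConf, hpa, h0a] using congrFun h ⟨a, ha⟩

end Orbit

/-- for any `c ≥ 3`, the bi-threshold SDS map over the Y-tree on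
`n = 3c - 2` vertices with thresholds `(kup, kdown) = (1, 3)` at every vertex and update
sequence `π = (1, 2, …, n)` has a periodic orbit of length `c`. -/
theorem ytree_bithreshold_cycle
    (c : ℕ) (hc : 3 ≤ c) :
    ∃ x : Fin (3 * c - 2) → Bool,
      (sdsMap (yTree c) (fun _ => 1) (fun _ => 3) (List.finRange (3 * c - 2)))^[c] x = x ∧
      ∀ p : ℕ, 0 < p → p < c →
        (sdsMap (yTree c) (fun _ => 1) (fun _ => 3) (List.finRange (3 * c - 2)))^[p] x ≠ x := by
  refine ⟨cycleConf c 0, iterate_cycleConf_period hc, fun p hp hpc => ?_⟩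
  rw [iterate_cycleConf hc hpc]
  exact cycleConf_ne_zero hc hp hpc
end

section
/- Let X be a finite tree, fix a root r, and for each vertex v ≠ r let p(v) denote its parent (the unique neighbor of v whose distance to r is one less than that of v). Assign every vertex v the thresholds k↑_v = 1 and k↓_v = d(v)+1, where d(v) is the degree of v. Let π be any permutation of the vertices that lists, for every i ≥ 0, all vertices at distance i+1 from r before all vertices at distance i from r. Then for every state x ∈ {0,1}^n and every vertex v ≠ r, the state x' = F_π(x) satisfies x'_v = x_{p(v)}. -/
/-!
Update children before parents. Inductively, when a vertex `w ≠ r` is updated, all of its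
children already carry `x w` while its parent still carries `x (p w)`. With `k↑ = 1` and
`k↓ = d(w) + 1` an off vertex switches on iff some neighbor is on, and an on vertex stays on iff
all neighbors are on; in both cases the new state of `w` is `x (p w)`.
-/

namespace SimpleGraph

variable {V : Type*} {G : SimpleGraph V}

def IsParentMap (G : SimpleGraph V) (r : V) (p : V → V) : Prop :=
  ∀ v, v ≠ r → G.Adj v (p v) ∧ G.dist (p v) r + 1 = G.dist v r

lemma Walk.dist_le_length_of_mem_support {u v w : V} {q : G.Walk u v} (hw : w ∈ q.support) :
    G.dist u w ≤ q.length := by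
  classical
  exact (dist_le _).trans (q.length_takeUntil_le_length hw)

/-- A shortest path from `r` to a neighbor `z` of `u` closer to `r` avoids `u`; by uniqueness of
paths in a tree, the path from `r` to `u` then passes through `z` just before reaching `u`. -/
lemma IsTree.eq_of_adj_of_dist_lt (hG : G.IsTree) {r u v w : V} (huv : G.Adj u v)
    (huw : G.Adj u w) (hv : G.dist v r < G.dist u r) (hw : G.dist w r < G.dist u r) :
    v = w := by
  obtain ⟨q, hq, -⟩ := hG.connected.exists_path_of_dist r u
  have eq_penultimate : ∀ z, G.Adj u z → G.dist z r < G.dist u r → z = q.penultimate := by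
    intro z huz hz
    rw [dist_comm, dist_comm (u := u)] at hz
    obtain ⟨s, hs, hslen⟩ := hG.connected.exists_path_of_dist r z
    have hu : u ∉ s.support := fun hu =>
      (s.dist_le_length_of_mem_support hu).not_gt (hslen ▸ hz)
    exact hG.isAcyclic.eq_penultimate_of_adj_end hq huz
      (hG.isAcyclic.mem_support_of_ne_mem_support_of_adj_of_isPath hq hs huz hu)
  rw [eq_penultimate v huv hv, eq_penultimate w huw hw]

lemma IsParentMap.parent_eq_of_adj {r : V} {p : V → V} (hp : G.IsParentMap r p)
    (hG : G.IsTree) {u w : V} (hw : w ≠ r) (hadj : G.Adj w u) (hu : u ≠ p w) :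
    u ≠ r ∧ p u = w := by
  obtain ⟨hwp, hdist⟩ := hp w hw
  rcases hG.dist_eq_dist_add_one_of_adj r hadj with h | h
  · simp only [dist_comm (u := r)] at h
    exact absurd (hG.eq_of_adj_of_dist_lt (r := r) hadj hwp (by omega) (by omega)) hu
  · simp only [dist_comm (u := r)] at h
    have hur : u ≠ r := by
      rintro rfl
      simp at h
    have hdist_u := (hp u hur).2
    exact ⟨hur, hG.eq_of_adj_of_dist_lt (r := r) (hp u hur).1 hadj.symm (by omega) (by omega)⟩

end SimpleGraph

lemma List.IsPrefix.mem_iff_idxOf_lt_idxOf {α : Type*} [BEq α] [LawfulBEq α] {l π : List α}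
    {a : α} (h : l ++ [a] <+: π) (ha : a ∉ l) (u : α) : u ∈ l ↔ π.idxOf u < π.idxOf a := by
  have hlen : π.idxOf a = l.length := by
    rw [← h.idxOf_eq_of_mem (by simp), List.idxOf_append_of_notMem ha]
    simp
  rw [hlen, ((List.prefix_append l [a]).trans h).mem_iff_idxOf_lt_length]

open SimpleGraph

section LocalStep

variable {n : ℕ} {G : SimpleGraph (Fin n)} {kup kdown : Fin n → ℕ}

lemma localStep_apply_of_ne {y : Fin n → Bool} {a v : Fin n} (h : v ≠ a) :
    localStep G kup kdown y a v = y v :=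
  Function.update_of_ne h _ _

lemma sdsMap_append_singleton (l : List (Fin n)) (a : Fin n) (y : Fin n → Bool) :
    sdsMap G kup kdown (l ++ [a]) y = localStep G kup kdown (sdsMap G kup kdown l y) a :=
  List.foldl_concat ..

lemma sdsMap_apply_of_notMem {l : List (Fin n)} {v : Fin n} (h : v ∉ l) (y : Fin n → Bool) :
    sdsMap G kup kdown l y v = y v := by
  induction l using List.reverseRecOn with
  | nil => rfl
  | append_singleton l a ih =>
    simp only [List.mem_append, List.mem_singleton, not_or] at h
    rw [sdsMap_append_singleton, localStep_apply_of_ne h.2, ih h.1]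

lemma localStep_self_eq_of_neighbors_agree_except {y : Fin n → Bool} {a q : Fin n}
    (hup : kup a = 1) (hdown : kdown a = (G.neighborSet a).ncard + 1) (hq : G.Adj a q)
    (hy : ∀ u, G.Adj a u → u ≠ q → y u = y a) :
    localStep G kup kdown y a a = y q := by
  have hmem : ∀ u, u ∈ {u | G.Adj a u ∧ y u = true} ↔
      G.Adj a u ∧ (if u = q then y q else y a) = true := by
    intro u
    by_cases huq : u = q
    · subst huq; simp
    · simp +contextual [huq, hy u]
  have hdeg : 0 < (G.neighborSet a).ncard := (Set.ncard_pos (Set.toFinite _)).mpr ⟨q, hq⟩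
  rw [localStep, Function.update_self, sigmaLoc, hup, hdown]
  cases hya : y a <;> cases hyq : y q
  · have hS : {u | G.Adj a u ∧ y u = true} = ∅ := by
      ext u; simp only [hmem, hya, hyq]; simp
    simp [hS]
  · have hS : {u | G.Adj a u ∧ y u = true} = {q} := by
      ext u; simp only [hmem, hya, hyq]; grind
    simp [hS]
  · have hS : {u | G.Adj a u ∧ y u = true} = G.neighborSet a \ {q} := by
      ext u; simp only [hmem, hya, hyq]; grind [mem_neighborSet]
    rw [hS, Set.ncard_sdiff_singleton_of_mem (show q ∈ G.neighborSet a from hq)]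
    simp only [↓reduceIte]
    rw [if_pos (by omega)]
  · have hS : {u | G.Adj a u ∧ y u = true} = G.neighborSet a := by
      ext u; simp only [hmem, hya, hyq]; grind [mem_neighborSet]
    simp [hS]

end LocalStep

lemma sdsMap_prefix_apply_eq_parent {n : ℕ} {G : SimpleGraph (Fin n)} {kup kdown : Fin n → ℕ}
    {r : Fin n} {p : Fin n → Fin n} {π : List (Fin n)} (hG : G.IsTree) (hp : G.IsParentMap r p)
    (hup : ∀ u, kup u = 1) (hdown : ∀ u, kdown u = (G.neighborSet u).ncard + 1)
    (hnd : π.Nodup) (horder : ∀ u w, G.dist w r < G.dist u r → π.idxOf u < π.idxOf w)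
    (x : Fin n → Bool) {l : List (Fin n)} (hl : l <+: π) {w : Fin n} (hwl : w ∈ l)
    (hwr : w ≠ r) : sdsMap G kup kdown l x w = x (p w) := by
  induction l using List.reverseRecOn generalizing w with
  | nil => simp at hwl
  | append_singleton l a ih =>
    have hlπ : l <+: π := (List.prefix_append l [a]).trans hl
    have ha : a ∉ l := fun hal =>
      (List.nodup_append.1 (hnd.sublist hl.sublist)).2.2 a hal a (List.mem_singleton_self a) rfl
    rw [sdsMap_append_singleton]
    by_cases hwa : w = a
    · subst hwa
      obtain ⟨hwp, hdist⟩ := hp w hwr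
      have hparent : sdsMap G kup kdown l x (p w) = x (p w) := by
        refine sdsMap_apply_of_notMem (fun hpl => ?_) x
        have hbefore := (hl.mem_iff_idxOf_lt_idxOf ha _).1 hpl
        have hafter := horder w (p w) (by omega)
        omega
      rw [localStep_self_eq_of_neighbors_agree_except (hup w) (hdown w) hwp, hparent]
      intro u hwu hne
      obtain ⟨hur, hpu⟩ := hp.parent_eq_of_adj hG hwr hwu hne
      have hul : u ∈ l := (hl.mem_iff_idxOf_lt_idxOf ha u).2 <|
        horder u w (by have hdist_u := (hp u hur).2; rw [hpu] at hdist_u; omega)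
      rw [ih hlπ hul hur, hpu, sdsMap_apply_of_notMem ha]
    · rw [localStep_apply_of_ne hwa]
      exact ih hlπ (by simpa [hwa] using hwl) hwr

/-- Let `X` be a finite tree with root `r`, and `p v` the parent of each
vertex `v ≠ r` (the neighbor of `v` one step closer to `r`). Give each vertex `v` the
thresholds `kup v = 1` and `kdown v = d(v) + 1`. If the update sequence `π` lists all
vertices at distance `i + 1` from `r` before all vertices at distance `i` from `r` (for
every `i`), then for every state `x` and every vertex `v ≠ r`, the updated state
`x' = F_π x` satisfies `x'_v = x_{p(v)}`. -/
theorem tree_sds_parent_copy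
    (n : ℕ) (G : SimpleGraph (Fin n)) (hG : G.IsTree)
    (r : Fin n) (p : Fin n → Fin n)
    (hp : ∀ v : Fin n, v ≠ r → G.Adj v (p v) ∧ G.dist (p v) r + 1 = G.dist v r)
    (π : List (Fin n)) (hnd : π.Nodup) (hall : ∀ v, v ∈ π)
    (horder : ∀ u w : Fin n, G.dist w r < G.dist u r → π.idxOf u < π.idxOf w)
    (x : Fin n → Bool) (v : Fin n) (hv : v ≠ r) :
    sdsMap G (fun _ => 1) (fun u => (G.neighborSet u).ncard + 1) π x v = x (p v) :=
  sdsMap_prefix_apply_eq_parent hG hp (fun _ => rfl) (fun _ => rfl) hnd horder x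
    List.prefix_rfl (hall v) hv
end

section
/- Let F be the synchronous threshold map on {0,1}^n determined by a real symmetric n×n matrix A and a threshold vector θ ∈ ℝ^n. Then for every x ∈ {0,1}^n there exists a natural number s such that F^{s+2}(x) = F^{s}(x). -/
/-!
Goles' Lyapunov functional `E(x, y) = ⟨θ, x + y⟩ - ⟨x, A y⟩` decreases along pairs of consecutive
states `(F z, z)`: by the symmetry of `A`, `E(F² z, F z) - E(F z, z)` is minus a sum of terms
`(F² z_i - z_i) (⟨A_i, F z⟩ - θ_i)`, each nonnegative by the threshold rule. On a periodic orbit `E`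
is therefore constant, all these terms vanish, and the vanishing forces `z ≤ F² z` coordinatewise.
So `z ≤ F² z ≤ F⁴ z ≤ ⋯` returns to `z`, whence `F² z = z`; every orbit of the finite state space
eventually enters a periodic orbit.
-/

open Matrix

namespace Function

variable {α : Type*}

theorem exists_iterate_mem_periodicPts [Finite α] (f : α → α) (x : α) :
    ∃ s, f^[s] x ∈ periodicPts f := by
  obtain ⟨m, n, hne, heq⟩ := Finite.exists_ne_map_eq_of_infinite (f^[·] x)
  wlog hlt : m < n generalizing m n
  · exact this n m hne.symm heq.symm (hne.lt_or_gt.resolve_left hlt)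
  refine ⟨m, mk_mem_periodicPts (Nat.sub_pos_of_lt hlt) ?_⟩
  rw [IsPeriodicPt, IsFixedPt, ← iterate_add_apply, Nat.sub_add_cancel hlt.le]
  exact heq.symm

variable {f : α → α} {p : ℕ} {y : α}

theorem IsPeriodicPt.apply_iterate_eq_of_forall_apply_le {β : Type*} [PartialOrder β] {L : α → β}
    (hL : ∀ z, L (f z) ≤ L z) (hp : 0 < p) (hy : IsPeriodicPt f p y) (t : ℕ) :
    L (f^[t] y) = L y := by
  have hanti : Antitone fun t => L (f^[t] y) :=
    antitone_nat_of_succ_le fun t => by simpa only [iterate_succ_apply'] using hL (f^[t] y)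
  refine le_antisymm (hanti t.zero_le) ?_
  calc L y = L (f^[t * p] y) := by rw [(hy.const_mul t).eq]
    _ ≤ L (f^[t] y) := hanti (Nat.le_mul_of_pos_right t hp)

theorem IsPeriodicPt.eq_of_le_apply_iterate [PartialOrder α] (hp : 0 < p)
    (hy : IsPeriodicPt f p y) (hle : ∀ t, f^[t] y ≤ f (f^[t] y)) : f y = y := by
  have hmono : Monotone fun t => f^[t] y :=
    monotone_nat_of_le_succ fun t => by simpa only [iterate_succ_apply'] using hle t
  refine le_antisymm ?_ (hle 0)
  calc f y = f^[1] y := rfl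
    _ ≤ f^[p] y := hmono hp
    _ = y := hy.eq

end Function

namespace ThresholdNetwork

noncomputable def boolToReal (b : Bool) : ℝ := if b then 1 else 0

theorem mul_sub_nonneg_of_iff {c : Bool} {s t : ℝ} (hc : c = true ↔ t ≤ s) (b : Bool) :
    0 ≤ (boolToReal c - boolToReal b) * (s - t) := by
  cases b <;> cases c <;> simp only [boolToReal] at hc ⊢ <;> norm_num at hc ⊢ <;> linarith

theorem le_of_mul_sub_eq_zero {b c : Bool} {s t : ℝ} (hc : c = true ↔ t ≤ s)
    (h : (boolToReal c - boolToReal b) * (s - t) = 0) : b ≤ c := by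
  cases b <;> cases c <;> simp only [boolToReal] at hc h ⊢ <;> norm_num at hc h ⊢
  linarith

variable {ι : Type*} [Fintype ι] {A : Matrix ι ι ℝ} {θ : ι → ℝ}

def IsThresholdMap (A : Matrix ι ι ℝ) (θ : ι → ℝ) (F : (ι → Bool) → ι → Bool) : Prop :=
  ∀ x i, F x i = true ↔ θ i ≤ (A *ᵥ (boolToReal ∘ x)) i

noncomputable def energy (A : Matrix ι ι ℝ) (θ : ι → ℝ) (x y : ι → Bool) : ℝ :=
  θ ⬝ᵥ (boolToReal ∘ x + boolToReal ∘ y) - (boolToReal ∘ x) ⬝ᵥ (A *ᵥ (boolToReal ∘ y))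

theorem energy_sub_energy (hA : A.IsSymm) (a b c : ι → Bool) :
    energy A θ c b - energy A θ b a =
      -∑ i, (boolToReal (c i) - boolToReal (a i)) * ((A *ᵥ (boolToReal ∘ b)) i - θ i) := by
  have hsymm : (boolToReal ∘ b) ⬝ᵥ (A *ᵥ (boolToReal ∘ a)) =
      (boolToReal ∘ a) ⬝ᵥ (A *ᵥ (boolToReal ∘ b)) := by
    rw [dotProduct_mulVec, ← mulVec_transpose, hA.eq, dotProduct_comm]
  change _ = -((boolToReal ∘ c - boolToReal ∘ a) ⬝ᵥ (A *ᵥ (boolToReal ∘ b) - θ))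
  simp only [energy, dotProduct_comm θ, add_dotProduct, sub_dotProduct, dotProduct_sub, hsymm]
  ring

variable {F : (ι → Bool) → ι → Bool}

theorem energy_map_le (hA : A.IsSymm) (hF : IsThresholdMap A θ F) (z : ι → Bool) :
    energy A θ (F (F z)) (F z) ≤ energy A θ (F z) z := by
  have hterms := fun i => mul_sub_nonneg_of_iff (hF (F z) i) (z i)
  linarith [energy_sub_energy (θ := θ) hA z (F z) (F (F z)),
    Finset.sum_nonneg fun i (_ : i ∈ Finset.univ) => hterms i]

theorem le_map_map_of_energy_eq (hA : A.IsSymm) (hF : IsThresholdMap A θ F) (z : ι → Bool)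
    (h : energy A θ (F (F z)) (F z) = energy A θ (F z) z) : z ≤ F (F z) := by
  have hterms := fun i => mul_sub_nonneg_of_iff (hF (F z) i) (z i)
  have hsum := energy_sub_energy (θ := θ) hA z (F z) (F (F z))
  rw [h, sub_self, zero_eq_neg,
    Finset.sum_eq_zero_iff_of_nonneg fun i _ => hterms i] at hsum
  exact fun i => le_of_mul_sub_eq_zero (hF (F z) i) (hsum i (Finset.mem_univ i))

theorem iterate_two_eq_of_isPeriodicPt (hA : A.IsSymm) (hF : IsThresholdMap A θ F) {p : ℕ}
    {y : ι → Bool} (hp : 0 < p) (hy : Function.IsPeriodicPt F p y) : F^[2] y = y := by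
  have hconst := hy.apply_iterate_eq_of_forall_apply_le (L := fun z => energy A θ (F z) z)
    (energy_map_le hA hF) hp
  refine (hy.iterate 2).eq_of_le_apply_iterate hp fun t => ?_
  rw [← Function.iterate_mul]
  apply le_map_map_of_energy_eq hA hF
  have hnext := hconst (2 * t + 1)
  rw [Function.iterate_succ_apply'] at hnext
  rw [hnext, hconst]

end ThresholdNetwork

/-- the synchronous standard threshold map on `{0,1}^n` determined by a real
symmetric matrix `A` and a threshold vector `θ`: the new state of coordinate `i` is `1`
iff the weighted sum `∑ j, A i j * x j` is `≥ θ i`. Every state eventually satisfies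
`F^[s+2] x = F^[s] x`. -/
theorem threshold_sync_two_periodic
    (n : ℕ) (A : Fin n → Fin n → ℝ) (hA : ∀ i j, A i j = A j i)
    (θ : Fin n → ℝ)
    (F : (Fin n → Bool) → Fin n → Bool)
    (hF : ∀ (x : Fin n → Bool) (i : Fin n), F x i = true ↔
      θ i ≤ ∑ j, A i j * (if x j = true then (1 : ℝ) else 0)) :
    ∀ x : Fin n → Bool, ∃ s : ℕ, F^[s + 2] x = F^[s] x := by
  intro x
  obtain ⟨s, hs⟩ := Function.exists_iterate_mem_periodicPts F x
  obtain ⟨p, hp, hper⟩ := Function.mem_periodicPts.mp hs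
  refine ⟨s, ?_⟩
  rw [add_comm, Function.iterate_add_apply]
  exact ThresholdNetwork.iterate_two_eq_of_isPeriodicPt (Matrix.IsSymm.ext fun i j => hA j i)
    hF hp hper
end

section
/- Let F = (f_1,…,f_n) be the synchronous threshold map on {0,1}^n determined by a real symmetric matrix A = (a_ij) and θ ∈ ℝ^n. Let T ≥ 1 and let z_1,…,z_n : ℤ/Tℤ → {0,1} satisfy z_j(l+1) = f_j(z_1(l),…,z_n(l)) for all j and all l ∈ ℤ/Tℤ (i.e., the columns form a periodic orbit of F of period dividing T). If z_i does not satisfy z_i(l+2) = z_i(l) for all l (its least period is at least 3), then Σ_{j=1}^n L(z_i, z_j) < 0. -/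
/-!
Write `u` for the indicator of `z i` and `r l = ∑ⱼ A i j z_j(l)` for the input received by
neuron `i` at time `l`. Summing by parts on `ℤ/Tℤ` turns `∑ⱼ L(z_i, z_j)` into
`∑ₗ (r l - θ i) (u (l-1) - u (l+1))`, where subtracting `θ i` is free because
`∑ₗ (u (l-1) - u (l+1)) = 0`. Since `u (l+1) = 1` exactly when `r l ≥ θ i`, every term is `≤ 0`,
and a time `m` with `u m = 1`, `u (m+2) = 0` (which exists unless `u` has period `2`) makes the
term at `l = m + 1` strictly negative.
-/

open Finset

noncomputable def boolToReal (b : Bool) : ℝ := if b = true then 1 else 0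

section ShiftSums

variable {G : Type*} [AddGroup G] [Fintype G]

theorem apply_add_eq_of_le_apply_add {M : Type*} [AddCommMonoid M] [PartialOrder M]
    [IsOrderedCancelAddMonoid M] {g : G → M} {a : G} (h : ∀ l, g l ≤ g (l + a)) (l : G) :
    g (l + a) = g l := by
  have hsum : ∑ l, g l = ∑ l, g (l + a) := (Equiv.sum_comp (Equiv.addRight a) g).symm
  exact ((sum_eq_sum_iff_of_le fun l _ => h l).mp hsum l (mem_univ l)).symm

theorem exists_eq_true_and_apply_add_eq_false {f : G → Bool} {a : G}
    (h : ¬ ∀ l, f (l + a) = f l) : ∃ m, f m = true ∧ f (m + a) = false := by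
  by_contra! hmono
  refine h fun l => ?_
  have hle : ∀ m, (f m).toNat ≤ (f (m + a)).toNat := fun m => by
    cases hm : f m
    · exact Nat.zero_le _
    · simp [hmono m hm]
  have hl := apply_add_eq_of_le_apply_add hle l
  revert hl
  cases f l <;> cases f (l + a) <;> simp

theorem sum_sub_shift_mul_eq (r v : G → ℝ) (a : G) (θ : ℝ) :
    ∑ l, (r (l + a) - r (l - a)) * v l = ∑ l, (r l - θ) * (v (l - a) - v (l + a)) := by
  have hplus : ∑ l, r (l + a) * v l = ∑ l, r l * v (l - a) :=
    Fintype.sum_equiv (Equiv.addRight a) _ _ fun l => by simp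
  have hminus : ∑ l, r (l - a) * v l = ∑ l, r l * v (l + a) :=
    Fintype.sum_equiv (Equiv.subRight a) _ _ fun l => by simp
  have hv : ∑ l, v (l - a) = ∑ l, v (l + a) :=
    (Equiv.sum_comp (Equiv.subRight a) v).trans (Equiv.sum_comp (Equiv.addRight a) v).symm
  simp only [sub_mul, mul_sub, sum_sub_distrib, ← mul_sum, hplus, hminus, hv]
  ring

end ShiftSums

theorem threshold_term_nonpos {b b' : Bool} {x θ : ℝ} (h : b' = true ↔ θ ≤ x) :
    (x - θ) * (boolToReal b - boolToReal b') ≤ 0 := by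
  cases b' <;> cases b <;> simp only [boolToReal, Bool.false_eq_true,
    if_true, if_false, true_iff, false_iff, not_le] at h ⊢ <;> nlinarith

theorem sum_threshold_mul_sub_shift_neg {G : Type*} [AddGroup G] [Fintype G]
    {u : G → Bool} {r : G → ℝ} {θ : ℝ} {a : G} (hu : ∀ l, u (l + a) = true ↔ θ ≤ r l)
    (hper : ¬ ∀ l, u (l + 2 • a) = u l) :
    ∑ l, (r l - θ) * (boolToReal (u (l - a)) - boolToReal (u (l + a))) < 0 := by
  obtain ⟨m, hm, hm'⟩ : ∃ m, u m = true ∧ u (m + 2 • a) = false :=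
    exists_eq_true_and_apply_add_eq_false hper
  rw [two_nsmul, ← add_assoc] at hm'
  have hbelow : r (m + a) < θ := not_le.mp fun hle => by simp [(hu (m + a)).mpr hle] at hm'
  refine sum_neg' (fun l _ => threshold_term_nonpos (hu l)) ⟨m + a, mem_univ _, ?_⟩
  simp only [add_sub_cancel_right, hm, hm', boolToReal, if_true, Bool.false_eq_true, if_false]
  linarith

theorem threshold_orbit_L_sum_neg_general
    (n T : ℕ) [NeZero T] (A : Fin n → Fin n → ℝ)
    (θ : Fin n → ℝ)
    (z : Fin n → ZMod T → Bool)
    (horb : ∀ (j : Fin n) (l : ZMod T), z j (l + 1) = true ↔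
      θ j ≤ ∑ k, A j k * (if z k l = true then (1 : ℝ) else 0))
    (i : Fin n)
    (hi : ¬ ∀ l : ZMod T, z i (l + 2) = z i l) :
    ∑ j, (A i j * ∑ l : ZMod T,
        ((if z j (l + 1) = true then (1 : ℝ) else 0) - (if z j (l - 1) = true then (1 : ℝ) else 0)) *
          (if z i l = true then (1 : ℝ) else 0)) < 0 := by
  set r : ZMod T → ℝ := fun l => ∑ j, A i j * boolToReal (z j l)
  have hexchange : ∑ j, (A i j * ∑ l : ZMod T,
      (boolToReal (z j (l + 1)) - boolToReal (z j (l - 1))) * boolToReal (z i l))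
      = ∑ l, (r (l + 1) - r (l - 1)) * boolToReal (z i l) := by
    simp only [r, mul_sum, sum_mul, ← sum_sub_distrib]
    rw [sum_comm]
    exact sum_congr rfl fun l _ => sum_congr rfl fun j _ => by ring
  have hper : ¬ ∀ l : ZMod T, z i (l + 2 • 1) = z i l := by simpa using hi
  calc _ = ∑ l, (r l - θ i) * (boolToReal (z i (l - 1)) - boolToReal (z i (l + 1))) :=
        hexchange.trans (sum_sub_shift_mul_eq r _ 1 (θ i))
    _ < 0 := sum_threshold_mul_sub_shift_neg (horb i) hper

/-- let `F` be the synchronous standard threshold map on `{0,1}^n` given by a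
real symmetric matrix `A` and thresholds `θ` (new state of coordinate `j` is `1` iff
`∑ k, A j k * x k ≥ θ j`). If `z_1, …, z_n : ℤ/Tℤ → {0,1}` satisfy
`z_j(l+1) = f_j(z_1(l), …, z_n(l))` for all `j, l`, and `z_i` does not satisfy
`z_i(l+2) = z_i(l)` for all `l`, then `∑_j L(z_i, z_j) < 0`, where
`L(z_i, z_j) = A i j * ∑_l (z_j(l+1) - z_j(l-1)) * z_i(l)`. -/
theorem threshold_orbit_L_sum_neg
    (n T : ℕ) [NeZero T] (A : Fin n → Fin n → ℝ) (hA : ∀ i j, A i j = A j i)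
    (θ : Fin n → ℝ)
    (z : Fin n → ZMod T → Bool)
    (horb : ∀ (j : Fin n) (l : ZMod T), z j (l + 1) = true ↔
      θ j ≤ ∑ k, A j k * (if z k l = true then (1 : ℝ) else 0))
    (i : Fin n)
    (hi : ¬ ∀ l : ZMod T, z i (l + 2) = z i l) :
    ∑ j, (A i j * ∑ l : ZMod T,
        ((if z j (l + 1) = true then (1 : ℝ) else 0) - (if z j (l - 1) = true then (1 : ℝ) else 0)) *
          (if z i l = true then (1 : ℝ) else 0)) < 0 :=
  threshold_orbit_L_sum_neg_general n T A θ z horb i hi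
end
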